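/- arXiv:2507.22597 — 6 statements merged into one kernel-verified Lean document; each statement's English description precedes it below -/
import Mathlib

section
/- Let q be a prime power, m ≥ 1, and let w = (1, w_1, …, w_m) be a weight vector of positive integers with w_0 = 1. If d ≥ w_1 q + 1, then the polynomial f = x_0^{d − w_1 q − 1}·(x_0 x_1^q − x_0^{w_1(q−1)+1} x_1) is a nonzero weighted homogeneous polynomial of degree d in 𝔽_q[x_0,…,x_m]^w that vanishes at every 𝔽_q-point of ℙ(w); consequently e_q(d; 1, w_1, …, w_m) = p_m for every d ≥ w_1 q + 1. -/
open MvPolynomial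

noncomputable section

/-- `pSum q k = 1 + q + ⋯ + q^(k-1)`; so `p_m = pSum q (m+1)`. -/
def pSum (q k : ℕ) : ℕ := ∑ i ∈ Finset.range k, q ^ i

/-- Equivalence of nonzero vectors under weighted scaling by the algebraic closure. -/
def wRel (F : Type) [Field F] {m : ℕ} (w : Fin (m + 1) → ℕ)
    (x y : {v : Fin (m + 1) → AlgebraicClosure F // v ≠ 0}) : Prop :=
  ∃ lam : (AlgebraicClosure F)ˣ, ∀ i, y.1 i = (lam : AlgebraicClosure F) ^ w i * x.1 i

/-- The weighted projective space `ℙ(w)` as set of orbits. -/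
def PW (F : Type) [Field F] {m : ℕ} (w : Fin (m + 1) → ℕ) : Type :=
  Quot (wRel F w)

def PW.mk (F : Type) [Field F] {m : ℕ} (w : Fin (m + 1) → ℕ)
    (x : {v : Fin (m + 1) → AlgebraicClosure F // v ≠ 0}) : PW F w :=
  Quot.mk _ x

/-- The `𝔽_q`-rational points of `ℙ(w)`: orbits fixed by coordinatewise Frobenius. -/
def ratPts (F : Type) [Field F] [Fintype F] {m : ℕ} (w : Fin (m + 1) → ℕ) :
    Set (PW F w) :=
  {c | ∃ x : {v : Fin (m + 1) → AlgebraicClosure F // v ≠ 0},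
    PW.mk F w x = c ∧
    ∃ h : (fun i => x.1 i ^ Fintype.card F) ≠ (0 : Fin (m + 1) → AlgebraicClosure F),
      PW.mk F w ⟨fun i => x.1 i ^ Fintype.card F, h⟩ = c}

/-- `V_{ℙ(w)}(f)(𝔽_q)`: the rational points at which `f` vanishes. -/
def vanishSet (F : Type) [Field F] [Fintype F] {m : ℕ} (w : Fin (m + 1) → ℕ)
    (f : MvPolynomial (Fin (m + 1)) F) : Set (PW F w) :=
  {c | c ∈ ratPts F w ∧ ∀ x, PW.mk F w x = c →
    MvPolynomial.eval x.1 (MvPolynomial.map (algebraMap F (AlgebraicClosure F)) f) = 0}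

/-- `e_q(d; w)`: the maximal number of rational zeroes of a nonzero
weighted homogeneous polynomial of degree `d`. -/
def eMax (F : Type) [Field F] [Fintype F] {m : ℕ} (w : Fin (m + 1) → ℕ) (d : ℕ) : ℕ :=
  sSup {n | ∃ f : MvPolynomial (Fin (m + 1)) F,
    f ≠ 0 ∧ MvPolynomial.IsWeightedHomogeneous w f d ∧ n = (vanishSet F w f).ncard}

/-- weighted degree of a monomial (exponent vector). -/
def wdeg {m : ℕ} (w : Fin (m + 1) → ℕ) (a : Fin (m + 1) →₀ ℕ) : ℕ := ∑ i, w i * a i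

/-- degree-lexicographic order (weighted degree first, `x_0 < x_1 < ⋯ < x_m`). -/
def dlexLt {m : ℕ} (w : Fin (m + 1) → ℕ) (a b : Fin (m + 1) →₀ ℕ) : Prop :=
  wdeg w a < wdeg w b ∨
    (wdeg w a = wdeg w b ∧ ∃ i, a i < b i ∧ ∀ j, i < j → a j = b j)

/-- `a` is the initial monomial of `f` for the weighted deglex order. -/
def IsInitial (F : Type) [Field F] {m : ℕ} (w : Fin (m + 1) → ℕ)
    (f : MvPolynomial (Fin (m + 1)) F) (a : Fin (m + 1) →₀ ℕ) : Prop :=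
  a ∈ f.support ∧ ∀ b ∈ f.support, b ≠ a → dlexLt w b a

/-- The vanishing ideal `I(ℙ(w)(𝔽_q))`, generated by the homogeneous polynomials
vanishing at every rational point. -/
def vanishingIdeal (F : Type) [Field F] [Fintype F] {m : ℕ} (w : Fin (m + 1) → ℕ) :
    Ideal (MvPolynomial (Fin (m + 1)) F) :=
  Ideal.span {g | (∃ e, MvPolynomial.IsWeightedHomogeneous w g e) ∧
    ∀ c ∈ ratPts F w, ∀ x, PW.mk F w x = c →
      MvPolynomial.eval x.1 (MvPolynomial.map (algebraMap F (AlgebraicClosure F)) g) = 0}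

/-- `M̄`: monomials divisible by no initial monomial of a nonzero homogeneous
element of the vanishing ideal. -/
def Mbar (F : Type) [Field F] [Fintype F] {m : ℕ} (w : Fin (m + 1) → ℕ) :
    Set (Fin (m + 1) →₀ ℕ) :=
  {a | ¬ ∃ g : MvPolynomial (Fin (m + 1)) F, g ≠ 0 ∧ g ∈ vanishingIdeal F w ∧
    (∃ e, MvPolynomial.IsWeightedHomogeneous w g e) ∧ ∃ b, IsInitial F w g b ∧ b ≤ a}

/-- `M̄_d`. -/
def MbarD (F : Type) [Field F] [Fintype F] {m : ℕ} (w : Fin (m + 1) → ℕ) (d : ℕ) :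
    Set (Fin (m + 1) →₀ ℕ) :=
  {a ∈ Mbar F w | wdeg w a = d}

/-- `M̄_{d,i}`. -/
def MbarDI (F : Type) [Field F] [Fintype F] {m : ℕ} (w : Fin (m + 1) → ℕ) (d : ℕ)
    (i : Fin (m + 1)) : Set (Fin (m + 1) →₀ ℕ) :=
  {a ∈ MbarD F w d | (∀ t, t < i → a t = 0) ∧ 1 ≤ a i}

/-- The regularity set `reg(ℙ(w)(𝔽_q)) = {d ≥ 1 : |M̄_d| = p_m}`. -/
def regSet (F : Type) [Field F] [Fintype F] {m : ℕ} (w : Fin (m + 1) → ℕ) : Set ℕ :=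
  {d | 1 ≤ d ∧ (MbarD F w d).ncard = pSum (Fintype.card F) (m + 1)}

/-- Footprint bound at level `dtil`: number of monomials of `M̄_{dtil}` divisible by `a`. -/
def FB (F : Type) [Field F] [Fintype F] {m : ℕ} (w : Fin (m + 1) → ℕ) (dtil : ℕ)
    (a : Fin (m + 1) →₀ ℕ) : ℕ :=
  {b | b ∈ MbarD F w dtil ∧ a ≤ b}.ncard

/-- `FB_i`: number of monomials of `M̄_{dtil, i}` divisible by `a`. -/
def FBi (F : Type) [Field F] [Fintype F] {m : ℕ} (w : Fin (m + 1) → ℕ) (dtil : ℕ)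
    (i : Fin (m + 1)) (a : Fin (m + 1) →₀ ℕ) : ℕ :=
  {b | b ∈ MbarDI F w dtil i ∧ a ≤ b}.ncard

/-- Hilbert function of `𝔽_q[x]/I(ℙ(w)(𝔽_q))` at degree `d`. -/
def hilb (F : Type) [Field F] [Fintype F] {m : ℕ} (w : Fin (m + 1) → ℕ) (d : ℕ) : ℕ :=
  Module.finrank F
    (↥(weightedHomogeneousSubmodule F w d) ⧸
      (Submodule.comap (weightedHomogeneousSubmodule F w d).subtype
        (Submodule.restrictScalars F (vanishingIdeal F w))))

/-- Denumerant: the number of representations `d = w0*i0 + w1*i1`. -/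
def den (w0 w1 d : ℕ) : ℕ := {p : ℕ × ℕ | w0 * p.1 + w1 * p.2 = d}.ncard

/-!
The binomial `B = x₀ x₁^q - x₀^(w₁(q-1)+1) x₁` is weighted homogeneous of degree `w₁ q + 1`
and vanishes at every `𝔽_q`-rational vector `y`, because `y₁^q = y₁` and `y₀^(w₁(q-1)+1) = y₀`.
Every representative of a rational point of `ℙ(w)` is `λ • y` for such a `y`, and weighted
homogeneity gives `f(λ • y) = λ^d f(y)`; so `x₀^(d-w₁q-1) B` vanishes on all of `ℙ(w)(𝔽_q)` and
`e_q(d) = |ℙ(w)(𝔽_q)|`.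

That number is `p_m = (q^(m+1) - 1)/(q - 1)`: nonzero rational vectors map onto the rational
points with fibres of size `q - 1`. The fibre through `y` is `{λ • y | λ^(q-1) ∈ Stab y}`, in
bijection with the cosets of `Stab y` in that group of scalars; since `λ ↦ λ^(q-1)` is onto
`𝔽̄_q^×` with kernel of order `q - 1`, the group has `|Stab y| (q - 1)` elements, and `Stab y` is
finite because all weights are positive.
-/

theorem FiniteField.pow_card_eq_self_iff_mem_range {F K : Type*} [Field F] [Fintype F] [Field K]
    [Algebra F K] {z : K} : z ^ Fintype.card F = z ↔ z ∈ Set.range (algebraMap F K) := by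
  have hsplit : (Polynomial.X ^ Fintype.card F - Polynomial.X : Polynomial F).Splits := by
    simpa using (FiniteField.isSplittingField_sub F F).splits
  have hne : (Polynomial.X ^ Fintype.card F - Polynomial.X : Polynomial F).map (algebraMap F K)
      ≠ 0 := Polynomial.map_ne_zero (FiniteField.X_pow_card_sub_X_ne_zero F Fintype.one_lt_card)
  have hroots := hsplit.roots_map (algebraMap F K)
  rw [FiniteField.roots_X_pow_card_sub_X] at hroots
  have hz := hroots ▸ Polynomial.mem_roots hne (a := z)
  simpa [sub_eq_zero, eq_comm] using hz.symm

theorem pow_mul_add_one_eq_self {M : Type*} [Monoid M] {x : M} {k : ℕ} (h : x ^ (k + 1) = x)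
    (n : ℕ) : x ^ (n * k + 1) = x := by
  induction n with
  | zero => simp
  | succ n ih => rw [show (n + 1) * k + 1 = n * k + (k + 1) by ring, pow_add, h, ← pow_succ, ih]

theorem Nat.card_eq_card_mul_of_card_fiber {α β : Type*} [Finite α] {f : α → β}
    (hf : Function.Surjective f) {k : ℕ} (hk : ∀ a, Nat.card {a' // f a' = f a} = k) :
    Nat.card α = Nat.card β * k := by
  have := Finite.of_surjective f hf
  have := Fintype.ofFinite β
  rw [← Nat.card_congr (Equiv.sigmaFiberEquiv f), Nat.card_sigma, Nat.card_eq_fintype_card]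
  have hk' (b : β) : Nat.card {a // f a = b} = k := by
    obtain ⟨a, rfl⟩ := hf b
    exact hk a
  simp only [hk', Finset.sum_const, Finset.card_univ, smul_eq_mul]

theorem Subgroup.card_comap_of_surjective {G H : Type*} [Group G] [Group H] {f : G →* H}
    (hf : Function.Surjective f) (T : Subgroup H) :
    Nat.card (T.comap f) = Nat.card T * Nat.card f.ker := by
  have hker : (f.subgroupComap T).ker = f.ker.subgroupOf (T.comap f) := by
    ext x
    simp only [MonoidHom.mem_ker, Subgroup.mem_subgroupOf, Subtype.ext_iff, OneMemClass.coe_one]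
    rfl
  rw [Subgroup.card_eq_card_quotient_mul_card_subgroup (f.subgroupComap T).ker,
    Nat.card_congr (QuotientGroup.quotientKerEquivOfSurjective _
      (f.subgroupComap_surjective_of_surjective T hf)).toEquiv, hker,
    Nat.card_congr (Subgroup.subgroupOfEquivOfLe fun x hx => ?_).toEquiv]
  rw [MonoidHom.mem_ker] at hx
  rw [Subgroup.mem_comap, hx]
  exact T.one_mem

theorem MvPolynomial.IsWeightedHomogeneous.eval₂_weighted_scaling {ι R S : Type*} [CommSemiring R]
    [CommSemiring S] [Fintype ι] {w : ι → ℕ} {f : MvPolynomial ι R} {d : ℕ}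
    (hf : f.IsWeightedHomogeneous w d) (φ : R →+* S) (l : S) (x : ι → S) :
    eval₂ φ (fun i => l ^ w i * x i) f = l ^ d * eval₂ φ x f := by
  simp only [eval₂_eq', Finset.mul_sum]
  refine Finset.sum_congr rfl fun a ha => ?_
  have hdeg : ∑ i, w i * a i = d := by
    rw [← hf (mem_support_iff.mp ha), Finsupp.weight_apply, Finsupp.sum_fintype _ _ (by simp)]
    simp [mul_comm]
  simp only [mul_pow, Finset.prod_mul_distrib, ← pow_mul, Finset.prod_pow_eq_pow_sum, hdeg]
  ring

theorem IsAlgClosed.powMonoidHom_surjective {K : Type*} [Field K] [IsAlgClosed K] {n : ℕ}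
    (hn : n ≠ 0) : Function.Surjective (powMonoidHom n : Kˣ →* Kˣ) := fun l => by
  obtain ⟨μ, hμ⟩ := IsAlgClosed.exists_pow_nat_eq (l : K) (Nat.pos_of_ne_zero hn)
  have hμ0 : μ ≠ 0 := by
    rintro rfl
    exact l.ne_zero (by rw [← hμ, zero_pow hn])
  exact ⟨Units.mk0 μ hμ0, Units.ext (by simpa using hμ)⟩

section WeightedAction

variable {ι K : Type*} [Field K] (w : ι → ℕ)

def weightedSMul (l : Kˣ) (x : ι → K) : ι → K := fun i => (l : K) ^ w i * x i

def weightedStab (x : ι → K) : Subgroup Kˣ where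
  carrier := {l | ∀ i, x i ≠ 0 → l ^ w i = 1}
  one_mem' _ _ := one_pow _
  mul_mem' ha hb i hi := by rw [mul_pow, ha i hi, hb i hi, one_mul]
  inv_mem' ha i hi := by rw [inv_pow, ha i hi, inv_one]

def frobStab (q : ℕ) (x : ι → K) : Subgroup Kˣ :=
  (weightedStab w x).comap (powMonoidHom (q - 1))

variable {w}

theorem mem_weightedStab {x : ι → K} {l : Kˣ} :
    l ∈ weightedStab w x ↔ ∀ i, x i ≠ 0 → l ^ w i = 1 :=
  Iff.rfl

theorem weightedSMul_one (x : ι → K) : weightedSMul w 1 x = x := by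
  funext i; simp [weightedSMul]

theorem weightedSMul_mul (l l' : Kˣ) (x : ι → K) :
    weightedSMul w (l * l') x = weightedSMul w l (weightedSMul w l' x) := by
  ext i; simp [weightedSMul, mul_pow, mul_assoc]

theorem weightedSMul_pow (l : Kˣ) (x : ι → K) (n : ℕ) :
    (fun i => weightedSMul w l x i ^ n) = weightedSMul w (l ^ n) (fun i => x i ^ n) := by
  ext i; simp [weightedSMul, mul_pow, ← pow_mul, mul_comm]

theorem weightedSMul_eq_zero_iff {l : Kˣ} {x : ι → K} : weightedSMul w l x = 0 ↔ x = 0 := by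
  simp [weightedSMul, funext_iff]

theorem weightedSMul_eq_weightedSMul_iff {l l' : Kˣ} {x : ι → K} :
    weightedSMul w l x = weightedSMul w l' x ↔ l⁻¹ * l' ∈ weightedStab w x := by
  simp only [weightedSMul, funext_iff, mul_eq_mul_right_iff, mem_weightedStab, mul_pow, inv_pow,
    inv_mul_eq_one, ← Units.val_pow_eq_pow_val, Units.val_inj]
  exact forall_congr' fun i => by tauto

theorem finite_weightedStab (hw : ∀ i, w i ≠ 0) {x : ι → K} (hx : x ≠ 0) :
    Finite (weightedStab w x) := by
  obtain ⟨i, hi⟩ := Function.ne_iff.mp hx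
  have : NeZero (w i) := ⟨hw i⟩
  have hle : weightedStab w x ≤ rootsOfUnity (w i) K := fun l hl => hl i hi
  exact Finite.of_injective _ (Subgroup.inclusion_injective hle)

theorem mem_frobStab_iff {q : ℕ} (hq : q ≠ 0) {x : ι → K} (hx : ∀ i, x i ^ q = x i) {l : Kˣ} :
    l ∈ frobStab w q x ↔ ∀ i, weightedSMul w l x i ^ q = weightedSMul w l x i := by
  rw [frobStab, Subgroup.mem_comap, powMonoidHom_apply, mem_weightedStab]
  refine forall_congr' fun i => ?_
  by_cases hxi : x i = 0
  · simp [weightedSMul, hxi, zero_pow hq]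
  simp only [ne_eq, hxi, not_false_eq_true, forall_const, weightedSMul, mul_pow, hx i,
    mul_left_inj' hxi, ← Units.val_pow_eq_pow_val, Units.val_inj]
  rw [← pow_sub_one_mul hq, mul_eq_right, pow_right_comm]

theorem card_frobStab (F : Type*) [Field F] [Fintype F] [IsAlgClosed K] [Algebra F K]
    (x : ι → K) :
    Nat.card (frobStab w (Fintype.card F) x) =
      Nat.card (weightedStab w x) * (Fintype.card F - 1) := by
  have hq := Fintype.one_lt_card (α := F)
  have : NeZero (Fintype.card F - 1) := ⟨by omega⟩
  have : NeZero ((Fintype.card F - 1 : ℕ) : K) := ⟨by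
    rw [← map_natCast (algebraMap F K), Nat.cast_sub hq.le, FiniteField.cast_card_eq_zero]
    simp⟩
  have hker : (powMonoidHom (Fintype.card F - 1) : Kˣ →* Kˣ).ker =
      rootsOfUnity (Fintype.card F - 1) K := by
    ext; simp [mem_rootsOfUnity]
  rw [frobStab, Subgroup.card_comap_of_surjective (IsAlgClosed.powMonoidHom_surjective (by omega)),
    hker, HasEnoughRootsOfUnity.natCard_rootsOfUnity]

end WeightedAction

/-- Nonzero `F`-rational vectors, described as the fixed points of the `|F|`-power Frobenius. -/
def ratVecs (F ι K : Type*) [Fintype F] [Field K] : Set (ι → K) :=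
  {y | y ≠ 0 ∧ ∀ i, y i ^ Fintype.card F = y i}

theorem ncard_ratVecs (F ι K : Type*) [Field F] [Fintype F] [Fintype ι] [Field K] [Algebra F K] :
    (ratVecs F ι K).ncard = Fintype.card F ^ Fintype.card ι - 1 := by
  have himage : ratVecs F ι K = (fun v : ι → F => algebraMap F K ∘ v) '' {0}ᶜ := by
    ext y
    simp only [ratVecs, FiniteField.pow_card_eq_self_iff_mem_range, Set.mem_image]
    constructor
    · rintro ⟨hy0, hy⟩
      choose v hv using hy
      refine ⟨v, fun hv0 => hy0 ?_, funext hv⟩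
      ext i
      simp [← hv, show v = 0 from hv0]
    · rintro ⟨v, hv0, rfl⟩
      refine ⟨fun h => hv0 ?_, fun i => ⟨v i, rfl⟩⟩
      ext i
      simpa using congrFun h i
  rw [himage, Set.ncard_image_of_injective _ (algebraMap F K).injective.comp_left,
    Set.ncard_compl, Set.ncard_singleton, Nat.card_fun, Nat.card_eq_fintype_card,
    Nat.card_eq_fintype_card]

theorem card_orbit_ratVecs (F : Type*) [Field F] [Fintype F] {ι K : Type*} [Field K]
    [IsAlgClosed K] [Algebra F K] {w : ι → ℕ} (hw : ∀ i, w i ≠ 0) {y : ι → K}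
    (hy : y ∈ ratVecs F ι K) :
    Nat.card {y' : ratVecs F ι K // ∃ l, y'.1 = weightedSMul w l y} = Fintype.card F - 1 := by
  have hq : Fintype.card F ≠ 0 := Fintype.card_ne_zero
  set S := frobStab w (Fintype.card F) y
  have hstab : weightedStab w y ≤ S := fun l hl i hi => by
    rw [powMonoidHom_apply, pow_right_comm, hl i hi, one_pow]
  let Θ : S → {y' : ratVecs F ι K // ∃ l, y'.1 = weightedSMul w l y} := fun l =>
    ⟨⟨weightedSMul w l y, weightedSMul_eq_zero_iff.not.mpr hy.1,
      (mem_frobStab_iff hq hy.2).mp l.2⟩, l, rfl⟩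
  have hΘ : Function.Surjective Θ := by
    rintro ⟨⟨y', hy'⟩, l, hl⟩
    simp only at hl
    subst hl
    exact ⟨⟨l, (mem_frobStab_iff hq hy.2).mpr hy'.2⟩, rfl⟩
  have hfiber : Nat.card {y' : ratVecs F ι K // ∃ l, y'.1 = weightedSMul w l y} =
      Nat.card (S ⧸ (weightedStab w y).subgroupOf S) :=
    Nat.card_congr <| (Setoid.quotientKerEquivOfSurjective Θ hΘ).symm.trans <|
      Quotient.congrRight fun a b => by
        simp only [Setoid.ker_def, QuotientGroup.leftRel_apply, Subgroup.mem_subgroupOf,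
          Subgroup.coe_mul, Subgroup.coe_inv, ← weightedSMul_eq_weightedSMul_iff, Θ,
          Subtype.ext_iff]
  have := finite_weightedStab hw hy.1
  have hcard := Subgroup.card_eq_card_quotient_mul_card_subgroup ((weightedStab w y).subgroupOf S)
  rw [Nat.card_congr (Subgroup.subgroupOfEquivOfLe hstab).toEquiv, card_frobStab F y,
    mul_comm] at hcard
  rw [hfiber]
  exact (Nat.eq_of_mul_eq_mul_right Nat.card_pos hcard).symm

section WeightedProjectiveSpace

variable {F : Type} [Field F] {m : ℕ} {w : Fin (m + 1) → ℕ}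

theorem wRel_iff {x y : {v : Fin (m + 1) → AlgebraicClosure F // v ≠ 0}} :
    wRel F w x y ↔ ∃ l, y.1 = weightedSMul w l x.1 := by
  simp [wRel, weightedSMul, funext_iff]

theorem wRel_equivalence : Equivalence (wRel F w) where
  refl _ := wRel_iff.mpr ⟨1, (weightedSMul_one _).symm⟩
  symm h := by
    obtain ⟨l, hl⟩ := wRel_iff.mp h
    exact wRel_iff.mpr ⟨l⁻¹, by rw [hl, ← weightedSMul_mul, inv_mul_cancel, weightedSMul_one]⟩
  trans h h' := by
    obtain ⟨l, hl⟩ := wRel_iff.mp h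
    obtain ⟨l', hl'⟩ := wRel_iff.mp h'
    exact wRel_iff.mpr ⟨l' * l, by rw [hl', hl, weightedSMul_mul]⟩

theorem PW.mk_eq_mk_iff {x y : {v : Fin (m + 1) → AlgebraicClosure F // v ≠ 0}} :
    PW.mk F w x = PW.mk F w y ↔ ∃ l, y.1 = weightedSMul w l x.1 :=
  (Quot.eq.trans (Equivalence.eqvGen_iff wRel_equivalence)).trans wRel_iff

variable [Fintype F]

theorem mem_ratPts_iff {c : PW F w} :
    c ∈ ratPts F w ↔
      ∃ y, ∃ hy : y ∈ ratVecs F (Fin (m + 1)) (AlgebraicClosure F), PW.mk F w ⟨y, hy.1⟩ = c := by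
  have hq := Fintype.one_lt_card (α := F)
  constructor
  · rintro ⟨x, rfl, _, hfrob⟩
    obtain ⟨l, hl⟩ := PW.mk_eq_mk_iff.mp hfrob
    -- `x = l • Frob x`; rescaling by a `(q-1)`-th root `u` of `l` gives a Frobenius-fixed vector
    obtain ⟨u, hu⟩ := IsAlgClosed.powMonoidHom_surjective (K := AlgebraicClosure F)
      (n := Fintype.card F - 1) (by omega) l
    have hu' : u ^ Fintype.card F = u * l := by
      rw [← hu, powMonoidHom_apply, ← pow_succ', Nat.sub_add_cancel hq.le]
    refine ⟨weightedSMul w u x.1,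
      ⟨weightedSMul_eq_zero_iff.not.mpr x.2, congrFun (?_ : (fun i => _ ^ Fintype.card F) = _)⟩,
      PW.mk_eq_mk_iff.mpr ⟨u⁻¹, by rw [← weightedSMul_mul, inv_mul_cancel, weightedSMul_one]⟩⟩
    rw [weightedSMul_pow, hu', weightedSMul_mul, ← hl]
  · rintro ⟨y, hy, rfl⟩
    have hfix : (fun i => y i ^ Fintype.card F) = y := funext hy.2
    exact ⟨⟨y, hy.1⟩, rfl, by rw [hfix]; exact hy.1, congrArg (PW.mk F w) (Subtype.ext hfix)⟩

theorem vanishSet_eq_ratPts {f : MvPolynomial (Fin (m + 1)) F} {d : ℕ}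
    (hf : f.IsWeightedHomogeneous w d)
    (hzero : ∀ y ∈ ratVecs F (Fin (m + 1)) (AlgebraicClosure F),
      eval y (map (algebraMap F (AlgebraicClosure F)) f) = 0) :
    vanishSet F w f = ratPts F w := by
  refine Set.Subset.antisymm (fun c hc => hc.1) fun c hc => ⟨hc, fun x hx => ?_⟩
  obtain ⟨y, hy, hyx⟩ := mem_ratPts_iff.mp (hx ▸ hc)
  obtain ⟨l, hl⟩ := PW.mk_eq_mk_iff.mp hyx
  unfold weightedSMul at hl
  rw [hl, eval_map, hf.eval₂_weighted_scaling, ← eval_map, hzero y hy, mul_zero]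

theorem ncard_ratPts (hw : ∀ i, w i ≠ 0) :
    (ratPts F w).ncard = pSum (Fintype.card F) (m + 1) := by
  have hq := Fintype.one_lt_card (α := F)
  let π : ratVecs F (Fin (m + 1)) (AlgebraicClosure F) → ratPts F w := fun y =>
    ⟨PW.mk F w ⟨y, y.2.1⟩, mem_ratPts_iff.mpr ⟨y, y.2, rfl⟩⟩
  have hπ : Function.Surjective π := by
    rintro ⟨c, hc⟩
    obtain ⟨y, hy, rfl⟩ := mem_ratPts_iff.mp hc
    exact ⟨⟨y, hy⟩, rfl⟩
  have hfiber (y) : Nat.card {y' // π y' = π y} = Fintype.card F - 1 := by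
    rw [← card_orbit_ratVecs F hw y.2]
    exact Nat.card_congr <| Equiv.subtypeEquivRight fun y' => by
      rw [Subtype.ext_iff, eq_comm]
      exact PW.mk_eq_mk_iff
  have hvecs := ncard_ratVecs F (Fin (m + 1)) (AlgebraicClosure F)
  rw [Fintype.card_fin] at hvecs
  have : Finite (ratVecs F (Fin (m + 1)) (AlgebraicClosure F)) :=
    Set.finite_of_ncard_pos (by rw [hvecs]; exact Nat.sub_pos_of_lt (Nat.one_lt_pow (by omega) hq))
  have hcount := Nat.card_eq_card_mul_of_card_fiber hπ hfiber
  rw [Nat.card_coe_set_eq, Nat.card_coe_set_eq, hvecs] at hcount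
  refine Nat.eq_of_mul_eq_mul_right (by omega : 0 < Fintype.card F - 1) ?_
  rw [← hcount, pSum, geom_sum_mul_of_one_le hq.le]

theorem eMax_eq_ncard_ratPts (hfin : (ratPts F w).Finite) {f : MvPolynomial (Fin (m + 1)) F}
    {d : ℕ} (hf0 : f ≠ 0) (hf : f.IsWeightedHomogeneous w d)
    (hV : vanishSet F w f = ratPts F w) :
    eMax F w d = (ratPts F w).ncard :=
  IsGreatest.csSup_eq ⟨⟨f, hf0, hf, by rw [hV]⟩, by
    rintro _ ⟨g, -, -, rfl⟩
    exact Set.ncard_le_ncard (fun c hc => hc.1) hfin⟩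

end WeightedProjectiveSpace

section FrobeniusBinomial

variable (F : Type*) [Field F] [Fintype F] {σ : Type*} (w : σ → ℕ) (i₀ i₁ : σ)

/-- The binomial `B_{i₀,i₁}` of the paper. -/
def frobBinomial : MvPolynomial σ F :=
  X i₀ * X i₁ ^ Fintype.card F - X i₀ ^ (w i₁ * (Fintype.card F - 1) + 1) * X i₁

variable {F w i₀ i₁}

theorem frobBinomial_ne_zero (h : i₀ ≠ i₁) : frobBinomial F w i₀ i₁ ≠ 0 := by
  have hq := Fintype.one_lt_card (α := F)
  rw [frobBinomial, sub_ne_zero]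
  intro heq
  have hdeg := congrArg (degreeOf i₁) heq
  rw [degreeOf_mul_X_self_pow_eq_add_of_ne_zero _ _ (X_ne_zero _), degreeOf_X_of_ne h.symm,
    ← pow_one (X i₁), degreeOf_mul_X_self_pow_eq_add_of_ne_zero _ _ (pow_ne_zero _ (X_ne_zero _)),
    degreeOf_X_pow_of_ne _ h.symm] at hdeg
  omega

theorem isWeightedHomogeneous_frobBinomial (hw₀ : w i₀ = 1) :
    (frobBinomial F w i₀ i₁).IsWeightedHomogeneous w (w i₁ * Fintype.card F + 1) := by
  have hq := Fintype.one_lt_card (α := F)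
  have hX (i : σ) := isWeightedHomogeneous_X F w i
  refine IsWeightedHomogeneous.sub ?_ ?_
  · have h := (hX i₀).mul ((hX i₁).pow (Fintype.card F))
    rwa [hw₀, smul_eq_mul, add_comm 1, Nat.mul_comm (Fintype.card F)] at h
  · have h := ((hX i₀).pow (w i₁ * (Fintype.card F - 1) + 1)).mul (hX i₁)
    rwa [hw₀, smul_eq_mul, mul_one, add_right_comm, ← Nat.mul_add_one,
      Nat.sub_add_cancel hq.le] at h

theorem eval_frobBinomial_eq_zero {K : Type*} [Field K] [Algebra F K] {y : σ → K}
    (hy : ∀ i, y i ^ Fintype.card F = y i) :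
    eval y (map (algebraMap F K) (frobBinomial F w i₀ i₁)) = 0 := by
  have hq := Fintype.one_lt_card (α := F)
  have hy₀ : y i₀ ^ (Fintype.card F - 1 + 1) = y i₀ := by rw [Nat.sub_add_cancel hq.le, hy]
  simp [frobBinomial, hy i₁, pow_mul_add_one_eq_self hy₀]

end FrobeniusBinomial

theorem X_pow_mul_frobBinomial_spec {F : Type} [Field F] [Fintype F] {m : ℕ}
    {w : Fin (m + 1) → ℕ} {i₀ i₁ : Fin (m + 1)} (h : i₀ ≠ i₁) (hw₀ : w i₀ = 1) {d : ℕ}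
    (hd : w i₁ * Fintype.card F + 1 ≤ d) :
    X i₀ ^ (d - w i₁ * Fintype.card F - 1) * frobBinomial F w i₀ i₁ ≠ 0 ∧
      (X i₀ ^ (d - w i₁ * Fintype.card F - 1) * frobBinomial F w i₀ i₁).IsWeightedHomogeneous
        w d ∧
      vanishSet F w (X i₀ ^ (d - w i₁ * Fintype.card F - 1) * frobBinomial F w i₀ i₁) =
        ratPts F w := by
  have hhom := ((isWeightedHomogeneous_X F w i₀).pow (d - w i₁ * Fintype.card F - 1)).mul
    (isWeightedHomogeneous_frobBinomial (i₁ := i₁) hw₀)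
  rw [hw₀, smul_eq_mul, mul_one, Nat.sub_sub, Nat.sub_add_cancel hd] at hhom
  refine ⟨mul_ne_zero (pow_ne_zero _ (X_ne_zero _)) (frobBinomial_ne_zero h), hhom,
    vanishSet_eq_ratPts hhom fun y hy => ?_⟩
  rw [map_mul, eval_mul, eval_frobBinomial_eq_zero hy.2, mul_zero]

/-- for `d ≥ w_1 q + 1` the polynomial `x_0^{d−w_1q−1} B_{0,1}` is
homogeneous of degree `d` and vanishes at every rational point; hence
`e_q(d) = p_m` in that range. -/
theorem stmt3 (F : Type) [Field F] [Fintype F] (m : ℕ) (hm : 1 ≤ m)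
    (w : Fin (m + 1) → ℕ) (hpos : ∀ i, 1 ≤ w i) (hw0 : w ⟨0, by omega⟩ = 1)
    (d : ℕ) (hd : w ⟨1, by omega⟩ * Fintype.card F + 1 ≤ d)
    (f : MvPolynomial (Fin (m + 1)) F)
    (hf : f = X ⟨0, by omega⟩ ^ (d - w ⟨1, by omega⟩ * Fintype.card F - 1) *
      (X ⟨0, by omega⟩ * X ⟨1, by omega⟩ ^ Fintype.card F -
        X ⟨0, by omega⟩ ^ (w ⟨1, by omega⟩ * (Fintype.card F - 1) + 1) *
          X ⟨1, by omega⟩)) :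
    f ≠ 0 ∧ MvPolynomial.IsWeightedHomogeneous w f d ∧
      vanishSet F w f = ratPts F w ∧
      ∀ d' : ℕ, w ⟨1, by omega⟩ * Fintype.card F + 1 ≤ d' →
        eMax F w d' = pSum (Fintype.card F) (m + 1) := by
  have h01 : (⟨0, by omega⟩ : Fin (m + 1)) ≠ ⟨1, by omega⟩ := by simp [Fin.ext_iff]
  have hcount := ncard_ratPts (F := F) fun i => Nat.one_le_iff_ne_zero.mp (hpos i)
  have hfin : (ratPts F w).Finite :=
    Set.finite_of_ncard_pos (by simp [hcount, pSum, Finset.sum_range_succ'])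
  subst hf
  obtain ⟨hf0, hfhom, hfV⟩ := X_pow_mul_frobBinomial_spec h01 hw0 hd
  refine ⟨hf0, hfhom, hfV, fun d' hd' => ?_⟩
  obtain ⟨hg0, hghom, hgV⟩ := X_pow_mul_frobBinomial_spec h01 hw0 hd'
  rw [eMax_eq_ncard_ratPts hfin hg0 hghom hgV, hcount]
end
end

section
/- An integer d̃ ≥ 1 belongs to reg(ℙ(w)(𝔽_q)) if and only if |M̄_{d̃, i}| = q^{m−i} for every i ∈ {0, 1, …, m}. -/
open MvPolynomial

noncomputable section

/-! Two standard monomials of the same degree and support, with exponents congruent modulo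
`q - 1`, would differ by a binomial vanishing on `𝔽_q^{m+1}`, hence on `ℙ(w)(𝔽_q)` (every
rational point has a representative in `𝔽_q^{m+1}` up to weighted scaling); so the larger one
would be an initial monomial. Hence the monomials of `M̄_d` with support `T` inject, via their
exponents modulo `q - 1`, into one fibre of the linear form `r ↦ ∑_{j ∈ T} (w_j / c) r_j` on
`(ℤ/(q-1))^T`, where `c = gcd_{j ∈ T} w_j`. This form is surjective by Bézout, so the fibre has
`(q-1)^{|T|-1}` elements. Summing over the supports `T = {i} ∪ S` with `S ⊆ {i+1, …, m}` gives
`|M̄_{d,i}| ≤ q^{m-i}`; since the `M̄_{d,i}` partition `M̄_d` and `∑_i q^{m-i} = p_m`, the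
equality `|M̄_d| = p_m` forces equality everywhere. -/

namespace WeightedProjectiveSpace

open Finset

section RationalPoints

variable {F : Type} [Field F] {m : ℕ} {w : Fin (m + 1) → ℕ}

theorem wRel_equivalence : Equivalence (wRel F w) where
  refl _ := ⟨1, fun _ => by simp⟩
  symm := by
    rintro x y ⟨l, hl⟩
    refine ⟨l⁻¹, fun i => ?_⟩
    rw [hl i, ← mul_assoc, ← mul_pow, ← Units.val_mul, inv_mul_cancel, Units.val_one, one_pow,
      one_mul]
  trans := by
    rintro x y z ⟨l, hl⟩ ⟨k, hk⟩
    exact ⟨k * l, fun i => by rw [hk i, hl i, ← mul_assoc, ← mul_pow, Units.val_mul]⟩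

theorem wRel_of_mk_eq {x y : {v : Fin (m + 1) → AlgebraicClosure F // v ≠ 0}}
    (h : PW.mk F w x = PW.mk F w y) : wRel F w x y :=
  wRel_equivalence.eqvGen_iff.mp (Quot.eqvGen_exact h)

theorem exists_algebraMap_eq_of_pow_card_eq_self {K : Type*} [Fintype F] [Field K] [Algebra F K]
    {x : K} (hx : x ^ Fintype.card F = x) : ∃ z : F, algebraMap F K z = x := by
  have hq : 1 < Fintype.card F := Fintype.one_lt_card
  have hroots := Polynomial.roots_map_of_injective_of_card_eq_natDegree
    (algebraMap F K).injective (p := Polynomial.X ^ Fintype.card F - Polynomial.X) (by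
      rw [FiniteField.roots_X_pow_card_sub_X, FiniteField.X_pow_card_sub_X_natDegree_eq F hq]
      exact Finset.card_univ)
  have hmem : x ∈ (Polynomial.map (algebraMap F K)
      (Polynomial.X ^ Fintype.card F - Polynomial.X)).roots := by
    rw [Polynomial.mem_roots (Polynomial.map_ne_zero (FiniteField.X_pow_card_sub_X_ne_zero F hq))]
    simp [hx]
  obtain ⟨z, -, hz⟩ := Multiset.mem_map.mp (hroots ▸ hmem)
  exact ⟨z, hz⟩

theorem exists_units_pow_mul_eq_self {K : Type*} [Field K] [IsAlgClosed K] {n : ℕ} (hn : 1 < n)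
    (lam : Kˣ) : ∃ μ : Kˣ, (μ : K) ^ n * lam = μ := by
  obtain ⟨k, rfl⟩ : ∃ k, n = k + 1 := ⟨n - 1, by omega⟩
  obtain ⟨z, hz⟩ := IsAlgClosed.exists_pow_nat_eq ((lam⁻¹ : Kˣ) : K) (n := k) (by omega)
  have hz0 : z ≠ 0 := by
    rintro rfl
    rw [zero_pow (by omega)] at hz
    exact lam⁻¹.ne_zero hz.symm
  refine ⟨Units.mk0 z hz0, ?_⟩
  rw [Units.val_mk0, pow_succ, hz, mul_comm _ z, mul_assoc, Units.inv_mul, mul_one]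

theorem eval_weight_smul {R σ : Type*} [CommSemiring R] [Fintype σ] {v : σ → ℕ}
    {g : MvPolynomial σ R} {d : ℕ} (hg : g.IsWeightedHomogeneous v d) (t : R) (y : σ → R) :
    eval (fun i => t ^ v i * y i) g = t ^ d * eval y g := by
  rw [eval_eq', eval_eq', Finset.mul_sum]
  refine Finset.sum_congr rfl fun b hb => ?_
  have hdeg : ∑ i, b i * v i = d := by
    rw [← hg (mem_support_iff.mp hb), Finsupp.weight_apply, Finsupp.sum_fintype _ _ (by simp)]
    simp
  simp_rw [mul_pow, ← pow_mul, Finset.prod_mul_distrib, Finset.prod_pow_eq_pow_sum,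
    mul_comm (v _), hdeg]
  ring

variable [Fintype F]

theorem exists_eq_smul_algebraMap_of_mem_ratPts {c : PW F w} (hc : c ∈ ratPts F w)
    {x : {v : Fin (m + 1) → AlgebraicClosure F // v ≠ 0}} (hx : PW.mk F w x = c) :
    ∃ (ν : (AlgebraicClosure F)ˣ) (z : Fin (m + 1) → F),
      ∀ i, x.1 i = (ν : AlgebraicClosure F) ^ w i * algebraMap F _ (z i) := by
  obtain ⟨x₀, hx₀, hne, hx₀q⟩ := hc
  obtain ⟨lam, hlam⟩ : ∃ lam : (AlgebraicClosure F)ˣ,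
      ∀ i, x₀.1 i ^ Fintype.card F = (lam : AlgebraicClosure F) ^ w i * x₀.1 i :=
    wRel_of_mk_eq (hx₀.trans hx₀q.symm)
  obtain ⟨μ, hμ⟩ := exists_units_pow_mul_eq_self (Fintype.one_lt_card : 1 < Fintype.card F) lam
  have hfix : ∀ i, ((μ : AlgebraicClosure F) ^ w i * x₀.1 i) ^ Fintype.card F
      = (μ : AlgebraicClosure F) ^ w i * x₀.1 i := fun i => by
    rw [mul_pow, ← pow_mul, mul_comm (w i), pow_mul, hlam i, ← mul_assoc, ← mul_pow, hμ]
  choose z hz using fun i => exists_algebraMap_eq_of_pow_card_eq_self (hfix i)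
  obtain ⟨ν, hν⟩ := wRel_of_mk_eq (hx₀.trans hx.symm)
  refine ⟨ν * μ⁻¹, z, fun i => ?_⟩
  rw [hν i, hz i, ← mul_assoc, ← mul_pow, ← Units.val_mul, mul_assoc, inv_mul_cancel, mul_one]

theorem mem_vanishingIdeal_of_eval_eq_zero {g : MvPolynomial (Fin (m + 1)) F} {d : ℕ}
    (hg : g.IsWeightedHomogeneous w d) (hv : ∀ z : Fin (m + 1) → F, eval z g = 0) :
    g ∈ vanishingIdeal F w := by
  refine Ideal.subset_span ⟨⟨d, hg⟩, fun c hc x hx => ?_⟩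
  obtain ⟨ν, z, hxz⟩ := exists_eq_smul_algebraMap_of_mem_ratPts hc hx
  have hgK : (map (algebraMap F (AlgebraicClosure F)) g).IsWeightedHomogeneous w d :=
    fun b hb => hg fun h => hb (by rw [coeff_map, h, map_zero])
  rw [funext hxz, eval_weight_smul hgK, eval_map]
  change _ * eval₂ _ (algebraMap F _ ∘ z) g = 0
  rw [← eval₂_comp, hv, map_zero, mul_zero]

end RationalPoints

section StandardMonomials

variable {F : Type} [Field F] [Fintype F] {m : ℕ} {w : Fin (m + 1) → ℕ}

theorem dlexLt_irrefl (a : Fin (m + 1) →₀ ℕ) : ¬ dlexLt w a a := by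
  rintro (h | ⟨-, i, h, -⟩) <;> exact lt_irrefl _ h

theorem dlexLt_or_dlexLt {a b : Fin (m + 1) →₀ ℕ} (hne : a ≠ b) (hdeg : wdeg w a = wdeg w b) :
    dlexLt w a b ∨ dlexLt w b a := by
  have hD : (univ.filter fun j => a j ≠ b j).Nonempty := by
    by_contra! h
    exact hne (Finsupp.ext fun j => by simpa using Finset.filter_eq_empty_iff.mp h (mem_univ j))
  obtain ⟨j, hj, hjmax⟩ := (univ.filter fun j => a j ≠ b j).exists_maximal hD
  have htop : ∀ k, j < k → a k = b k := fun k hk => by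
    by_contra h
    exact (hjmax (mem_filter.mpr ⟨mem_univ k, h⟩) hk.le).not_gt hk
  rcases lt_or_gt_of_ne (mem_filter.mp hj).2 with h | h
  · exact Or.inl (Or.inr ⟨hdeg, j, h, htop⟩)
  · exact Or.inr (Or.inr ⟨hdeg.symm, j, h, fun k hk => (htop k hk).symm⟩)

theorem pow_eq_pow_of_modEq_card_sub_one (z : F) {n n' : ℕ}
    (h : n ≡ n' [MOD Fintype.card F - 1]) (h0 : n = 0 ↔ n' = 0) : z ^ n = z ^ n' := by
  by_cases hz : z = 0
  · subst hz
    by_cases hn : n = 0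
    · rw [hn, h0.mp hn]
    · rw [zero_pow hn, zero_pow (mt h0.mpr hn)]
  · have hdvd := orderOf_dvd_of_pow_eq_one (FiniteField.pow_card_sub_one_eq_one z hz)
    rw [← pow_mod_orderOf, ← pow_mod_orderOf z n', h.of_dvd hdvd]

theorem eval_monomial_eq_of_modEq {σ : Type*} {a a' : σ →₀ ℕ} (hs : a.support = a'.support)
    (hmod : ∀ j, a j ≡ a' j [MOD Fintype.card F - 1]) (z : σ → F) :
    eval z (monomial a 1) = eval z (monomial a' 1) := by
  simp only [eval_monomial, one_mul, Finsupp.prod, hs]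
  refine Finset.prod_congr rfl fun j _ => pow_eq_pow_of_modEq_card_sub_one _ (hmod j) ?_
  simp only [← Finsupp.notMem_support_iff, hs]

theorem notMem_Mbar_of_dlexLt {a a' : Fin (m + 1) →₀ ℕ} (hlt : dlexLt w a' a)
    (hdeg : wdeg w a' = wdeg w a)
    (hv : ∀ z : Fin (m + 1) → F, eval z (monomial a 1) = eval z (monomial a' 1)) :
    a ∉ Mbar F w := by
  classical
  have hne : a' ≠ a := by
    rintro rfl
    exact dlexLt_irrefl a' hlt
  have hweight : ∀ b : Fin (m + 1) →₀ ℕ, Finsupp.weight w b = wdeg w b := fun b => by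
    rw [Finsupp.weight_apply, Finsupp.sum_fintype _ _ (by simp), wdeg]
    simp [mul_comm]
  set g : MvPolynomial (Fin (m + 1)) F := monomial a 1 - monomial a' 1
  have hcoeff : coeff a g = 1 := by simp [g, coeff_monomial, hne]
  have hsupp : ∀ b ∈ g.support, b = a ∨ b = a' := fun b hb => by
    simpa [support_monomial] using support_sub _ _ _ hb
  have hg : g.IsWeightedHomogeneous w (wdeg w a) :=
    (isWeightedHomogeneous_monomial _ _ _ (hweight a)).sub
      (isWeightedHomogeneous_monomial _ _ _ ((hweight a').trans hdeg))
  refine fun hM => hM ⟨g, fun h => by simp [h] at hcoeff, ?_, ⟨_, hg⟩, a, ⟨?_, ?_⟩, le_rfl⟩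
  · exact mem_vanishingIdeal_of_eval_eq_zero hg fun z => by simp [g, hv z]
  · simp [mem_support_iff, hcoeff]
  · intro b hb hba
    obtain rfl := (hsupp b hb).resolve_left hba
    exact hlt

theorem eq_of_mem_MbarD_of_modEq {d : ℕ} {a a' : Fin (m + 1) →₀ ℕ} (ha : a ∈ MbarD F w d)
    (ha' : a' ∈ MbarD F w d) (hs : a.support = a'.support)
    (hmod : ∀ j, a j ≡ a' j [MOD Fintype.card F - 1]) : a = a' := by
  by_contra hne
  rcases dlexLt_or_dlexLt hne (ha.2.trans ha'.2.symm) with h | h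
  · exact notMem_Mbar_of_dlexLt h (ha.2.trans ha'.2.symm)
      (fun z => (eval_monomial_eq_of_modEq hs hmod z).symm) ha'.1
  · exact notMem_Mbar_of_dlexLt h (ha'.2.trans ha.2.symm)
      (eval_monomial_eq_of_modEq hs hmod) ha.1

end StandardMonomials

theorem card_filter_sum_mul_eq {κ : Type*} [Fintype κ] [DecidableEq κ] {e : ℕ} [NeZero e]
    (v : κ → ℤ) (hv : ∃ g : κ → ℤ, ∑ j, v j * g j = 1) (t : ZMod e) :
    #{r : κ → ZMod e | ∑ j, (v j : ZMod e) * r j = t} = e ^ (Fintype.card κ - 1) := by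
  obtain ⟨g, hg⟩ := hv
  let φ : (κ → ZMod e) →ₗ[ZMod e] ZMod e := ∑ j, (v j : ZMod e) • LinearMap.proj j
  have hφ : ∀ r, φ r = ∑ j, (v j : ZMod e) * r j := fun r => by simp [φ]
  have hsurj : ∀ s, s ∈ Set.range φ := fun s => ⟨fun j => s * g j, by
    rw [hφ]
    simp_rw [mul_left_comm _ s, ← Finset.mul_sum, ← Int.cast_mul, ← Int.cast_sum, hg]
    simp⟩
  have hκ : 0 < Fintype.card κ := Fintype.card_pos_iff.mpr <| by
    by_contra! h
    simp at hg
  have hfib : ∀ s, #{r | φ r = s} = #{r | φ r = t} := fun s =>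
    AddMonoidHom.card_fiber_eq_of_mem_range φ (hsurj s) (hsurj t)
  have htotal : e * e ^ (Fintype.card κ - 1) = e * #{r | φ r = t} := calc
    _ = #(univ : Finset (κ → ZMod e)) := by rw [← pow_succ', Nat.sub_add_cancel hκ]; simp
    _ = ∑ s : ZMod e, #{r | φ r = s} := card_eq_sum_card_fiberwise fun _ _ => mem_univ _
    _ = e * #{r | φ r = t} := by simp [hfib]
  simp_rw [← hφ]
  exact (Nat.eq_of_mul_eq_mul_left (Nat.pos_of_ne_zero (NeZero.ne e)) htotal).symm

section Counting

variable {F : Type} [Field F] [Fintype F] {m : ℕ} {w : Fin (m + 1) → ℕ}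

theorem wdeg_eq_sum_support (a : Fin (m + 1) →₀ ℕ) : wdeg w a = ∑ j ∈ a.support, w j * a j :=
  (Finset.sum_subset (subset_univ _) fun j _ hj => by
    rw [Finsupp.notMem_support_iff.mp hj, mul_zero]).symm

theorem finite_MbarD (hpos : ∀ j, 1 ≤ w j) (d : ℕ) : (MbarD F w d).Finite := by
  refine (Set.finite_Iic (Finsupp.equivFunOnFinite.symm fun _ => d)).subset fun a ha t => ?_
  have := Finset.single_le_sum (f := fun t => w t * a t) (fun _ _ => Nat.zero_le _) (mem_univ t)
  have := Nat.le_mul_of_pos_left (a t) (hpos t)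
  have hd : ∑ t, w t * a t = d := ha.2
  change a t ≤ d
  omega

theorem ncard_MbarD_support_eq_le (hpos : ∀ j, 1 ≤ w j) (d : ℕ) {T : Finset (Fin (m + 1))}
    (hT : T.Nonempty) :
    {a ∈ MbarD F w d | a.support = T}.ncard ≤ (Fintype.card F - 1) ^ (#T - 1) := by
  have hq : 1 < Fintype.card F := Fintype.one_lt_card
  have : NeZero (Fintype.card F - 1) := ⟨by omega⟩
  set c : ℤ := T.gcd fun j => (w j : ℤ)
  obtain ⟨j₀, hj₀⟩ := hT
  have hc : c ≠ 0 := fun h => by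
    have := (Finset.gcd_eq_zero_iff.mp h) j₀ hj₀
    have := hpos j₀
    omega
  have hcw : ∀ j ∈ T, c * ((w j : ℤ) / c) = w j := fun j hj => Int.mul_ediv_cancel' (gcd_dvd hj)
  have hbezout : ∃ g : T → ℤ, ∑ j : T, (w j : ℤ) / c * g j = 1 := by
    obtain ⟨g, hg⟩ := Finset.gcd_eq_sum_mul T fun j => (w j : ℤ) / c
    refine ⟨fun j => g j, ?_⟩
    rw [Finset.sum_coe_sort T fun j => (w j : ℤ) / c * g j, ← hg]
    exact gcd_div_eq_one hj₀ (by have := hpos j₀; omega)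
  let ρ : (Fin (m + 1) →₀ ℕ) → (T → ZMod (Fintype.card F - 1)) := fun a j => (a j : ZMod _)
  have hmaps : ∀ a ∈ {a ∈ MbarD F w d | a.support = T},
      ρ a ∈ ({r | ∑ j : T, (((w j : ℤ) / c : ℤ) : ZMod _) * r j = (((d : ℤ) / c : ℤ) : ZMod _)} :
        Finset (T → ZMod (Fintype.card F - 1))) := by
    rintro a ⟨ha, rfl⟩
    have hsum : ∑ j ∈ a.support, (w j : ℤ) / c * a j = d / c := by
      refine Int.eq_ediv_of_mul_eq_right hc ?_
      rw [Finset.mul_sum, ← ha.2, wdeg_eq_sum_support]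
      push_cast
      exact Finset.sum_congr rfl fun j hj => by rw [← mul_assoc, hcw j hj]
    simp only [mem_filter, mem_univ, true_and, ρ, ← hsum]
    push_cast
    exact Finset.sum_coe_sort a.support fun j =>
      (((w j : ℤ) / c : ℤ) : ZMod (Fintype.card F - 1)) * (a j : ZMod (Fintype.card F - 1))
  have hinj : Set.InjOn ρ {a ∈ MbarD F w d | a.support = T} := by
    rintro a ⟨ha, haT⟩ a' ⟨ha', ha'T⟩ h
    refine eq_of_mem_MbarD_of_modEq ha ha' (haT.trans ha'T.symm) fun j => ?_
    by_cases hj : j ∈ T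
    · exact (ZMod.natCast_eq_natCast_iff _ _ _).mp (congrFun h ⟨j, hj⟩)
    · rw [Finsupp.notMem_support_iff.mp (haT ▸ hj), Finsupp.notMem_support_iff.mp (ha'T ▸ hj)]
  calc _ ≤ _ := Set.ncard_le_ncard_of_injOn ρ hmaps hinj (Finset.finite_toSet _)
    _ = _ := by rw [Set.ncard_coe_finset, card_filter_sum_mul_eq _ hbezout, Fintype.card_coe]

theorem ncard_MbarDI_le (hpos : ∀ j, 1 ≤ w j) (d : ℕ) (i : Fin (m + 1)) :
    (MbarDI F w d i).ncard ≤ Fintype.card F ^ (m - i) := by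
  have hsub : MbarDI F w d i ⊆
      ⋃ S ∈ (Ioi i).powerset, {a ∈ MbarD F w d | a.support = insert i S} := by
    intro a ha
    have hi : i ∈ a.support := Finsupp.mem_support_iff.mpr (by have := ha.2.2; omega)
    refine Set.mem_biUnion (x := a.support.erase i) (mem_powerset.mpr fun j hj => ?_)
      ⟨ha.1, (insert_erase hi).symm⟩
    obtain ⟨hji, hj⟩ := mem_erase.mp hj
    exact mem_Ioi.mpr (lt_of_le_of_ne (not_lt.mp fun h => Finsupp.mem_support_iff.mp hj
      (ha.2.1 j h)) (Ne.symm hji))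
  have hfin : (⋃ S ∈ (Ioi i).powerset, {a ∈ MbarD F w d | a.support = insert i S}).Finite :=
    (finite_MbarD hpos d).subset (Set.iUnion₂_subset fun _ _ => Set.sep_subset _ _)
  calc (MbarDI F w d i).ncard
      ≤ (⋃ S ∈ (Ioi i).powerset, {a ∈ MbarD F w d | a.support = insert i S}).ncard :=
        Set.ncard_le_ncard hsub hfin
    _ ≤ ∑ S ∈ (Ioi i).powerset, {a ∈ MbarD F w d | a.support = insert i S}.ncard :=
        Finset.set_ncard_biUnion_le _ _
    _ ≤ ∑ S ∈ (Ioi i).powerset, (Fintype.card F - 1) ^ #S := by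
        refine Finset.sum_le_sum fun S hS => ?_
        have hiS : i ∉ S := fun h => lt_irrefl i (mem_Ioi.mp (mem_powerset.mp hS h))
        simpa [card_insert_of_notMem hiS] using
          ncard_MbarD_support_eq_le hpos d (insert_nonempty i S)
    _ = (Fintype.card F - 1 + 1) ^ #(Ioi i) := by
        simpa using Finset.sum_pow_mul_eq_add_pow (Fintype.card F - 1) 1 (Ioi i)
    _ = Fintype.card F ^ (m - i) := by
        have hq : 1 < Fintype.card F := Fintype.one_lt_card
        rw [Nat.sub_add_cancel hq.le, Fin.card_Ioi, Nat.add_sub_cancel]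

theorem ncard_MbarD_eq_sum (hpos : ∀ j, 1 ≤ w j) {d : ℕ} (hd : 1 ≤ d) :
    (MbarD F w d).ncard = ∑ i, (MbarDI F w d i).ncard := by
  have hunion : MbarD F w d = ⋃ i, MbarDI F w d i := by
    refine Set.Subset.antisymm (fun a ha => ?_) (Set.iUnion_subset fun i a ha => ha.1)
    have hsupp : a.support.Nonempty := Finsupp.support_nonempty_iff.mpr fun h => by
      simp [MbarD, h, wdeg] at ha
      omega
    refine Set.mem_iUnion.mpr ⟨a.support.min' hsupp, ha, fun t ht => ?_, ?_⟩
    · by_contra h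
      exact (Finset.min'_le _ t (Finsupp.mem_support_iff.mpr h)).not_gt ht
    · exact Nat.one_le_iff_ne_zero.mpr (Finsupp.mem_support_iff.mp (Finset.min'_mem _ _))
  have hdisj : Pairwise (Function.onFun Disjoint (MbarDI F w d)) := by
    intro i j hij
    refine Set.disjoint_left.mpr fun a hi hj => ?_
    rcases lt_or_gt_of_ne hij with h | h
    · exact absurd (hj.2.1 i h) (by have := hi.2.2; omega)
    · exact absurd (hi.2.1 j h) (by have := hj.2.2; omega)
  rw [hunion, Set.ncard_iUnion_of_finite (fun i => (finite_MbarD hpos d).subset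
    fun a ha => ha.1) hdisj, finsum_eq_sum_of_fintype]

theorem sum_pow_sub_eq_pSum (q : ℕ) : ∑ i : Fin (m + 1), q ^ (m - i) = pSum q (m + 1) := by
  rw [Fin.sum_univ_eq_sum_range (fun i => q ^ (m - i)) (m + 1), pSum,
    ← Finset.sum_range_reflect]
  exact Finset.sum_congr rfl fun x hx => by
    rw [Nat.add_sub_cancel, Nat.sub_sub_self (Nat.lt_succ_iff.mp (mem_range.mp hx))]

end Counting

end WeightedProjectiveSpace

open WeightedProjectiveSpace

/-- Lemma 2.9 of the paper: `d̃ ∈ reg(ℙ(w)(𝔽_q))` iff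
`|M̄_{d̃,i}| = q^{m−i}` for every `i`. -/
theorem stmt6 (F : Type) [Field F] [Fintype F] (m : ℕ) (w : Fin (m + 1) → ℕ)
    (hpos : ∀ i, 1 ≤ w i)
    (dtil : ℕ) (hdtil : 1 ≤ dtil) :
    dtil ∈ regSet F w ↔
      ∀ i : Fin (m + 1),
        (MbarDI F w dtil i).ncard = Fintype.card F ^ (m - (i : ℕ)) := by
  rw [regSet, Set.mem_ofPred_eq, and_iff_right hdtil, ncard_MbarD_eq_sum hpos hdtil,
    ← sum_pow_sub_eq_pSum]
  exact (Finset.sum_eq_sum_iff_of_le fun i _ => ncard_MbarDI_le hpos dtil i).trans (by simp)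

end
end

section
/- Let d ≥ 0, fix 0 ≤ j_0 ≤ m, and let μ = x_{j_0}^{a_{j_0}} ⋯ x_m^{a_m} ∈ M̄_{d, j_0}. Then: (i) FB_i(μ) = 0 for every i ≥ j_0 + 1; (ii) FB(μ) = Σ_{i=0}^{j_0} FB_i(μ); (iii) if moreover d ≤ w_1 q, then for every i ≤ j_0 such that w_0 = ⋯ = w_i = 1, FB_i(μ) = ∏_{j=i+1}^{m} (q − a_j). -/
open MvPolynomial

noncomputable section

/-!
On a rational point of `ℙ(w)` Frobenius acts as a weighted scaling, so for two monomials `u ≠ v`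
of the same weighted degree, with the same support and exponents congruent modulo `q - 1`, the
binomial `x^u - x^v` vanishes on `ℙ(w)(𝔽_q)`. Hence `M̄_d` holds at most one monomial of each such
residue class, and a count in the groups `(ℤ/(q-1))^S` bounds the number of classes of degree `d`
by `p_m`. For `d̃ ∈ reg` the equality `|M̄_{d̃}| = p_m` then forces `M̄_{d̃}` to represent every
class.

For `w_i = 1` the binomial `x_i x_j^q - x_i^(1 + w_j (q-1)) x_j` bounds the exponents behind `x_i`
in `M̄_{d̃,i}` by `q - 1`; conversely every such exponent pattern, with `x_i` absorbing the remaining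
degree, is the only representative of its class and so lies in `M̄_{d̃,i}`. Counting the patterns
above `a` gives (iii); (i) and (ii) sort the multiples of `a` by their first variable.
-/

section General

def residueClass {ι : Type*} (n : ℕ) (b : ι →₀ ℕ) : Finset ι × (ι → ZMod n) :=
  (b.support, fun j => b j)

theorem residueClass_eq_iff {ι : Type*} {n : ℕ} {b b' : ι →₀ ℕ} :
    residueClass n b = residueClass n b' ↔
      (∀ t, b t = 0 ↔ b' t = 0) ∧ ∀ t, b t ≡ b' t [MOD n] := by
  simp only [residueClass, Prod.mk.injEq, Finset.ext_iff, Finsupp.mem_support_iff, ne_eq,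
    not_iff_not, funext_iff, ZMod.natCast_eq_natCast_iff]

theorem pow_eq_pow_mul_zpow {K : Type*} [Field K] {n : ℕ} (hn : n ≠ 0) {x c : K}
    (hx : x ^ (n + 1) = c * x) {u v : ℕ} (h0 : u = 0 ↔ v = 0) {k : ℤ}
    (hk : (u : ℤ) - v = n * k) : x ^ u = x ^ v * c ^ k := by
  by_cases hx0 : x = 0
  · subst hx0
    rcases Nat.eq_zero_or_pos u with hu | hu
    · have hv := h0.mp hu
      subst hu hv
      have : k = 0 := by simpa [hn] using hk.symm
      simp [this]
    · rw [zero_pow hu.ne', zero_pow (mt h0.mpr hu.ne'), zero_mul]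
  · have hxn : x ^ n = c := mul_right_cancel₀ hx0 (by rw [← pow_succ, hx])
    have hu : (u : ℤ) = v + n * k := by omega
    rw [← zpow_natCast, hu, zpow_add₀ hx0, zpow_mul, zpow_natCast, zpow_natCast, hxn]

theorem prod_zpow_eq_zpow_sum {ι K : Type*} [Field K] {a : K} (ha : a ≠ 0) (s : Finset ι)
    (e : ι → ℤ) : ∏ t ∈ s, a ^ e t = a ^ ∑ t ∈ s, e t := by
  classical
  induction s using Finset.induction_on with
  | empty => simp
  | insert b s hb ih => rw [Finset.prod_insert hb, Finset.sum_insert hb, ih, zpow_add₀ ha]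

theorem prod_pow_eq_prod_pow_of_modEq {ι K : Type*} [Fintype ι] [Field K] {n : ℕ} (hn : n ≠ 0)
    (w : ι → ℕ) (x : ι → K) (ν : Kˣ) (hx : ∀ t, x t ^ (n + 1) = ν ^ w t * x t) {u v : ι → ℕ}
    (h0 : ∀ t, u t = 0 ↔ v t = 0) (hmod : ∀ t, u t ≡ v t [MOD n])
    (hdeg : ∑ t, w t * u t = ∑ t, w t * v t) : ∏ t, x t ^ u t = ∏ t, x t ^ v t := by
  choose k hk using fun t => Nat.modEq_iff_dvd.mp (hmod t).symm
  have hsum : ∑ t, (w t : ℤ) * k t = 0 := by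
    have hdegℤ : ∑ t, (w t : ℤ) * u t = ∑ t, (w t : ℤ) * v t := by exact_mod_cast hdeg
    have : (n : ℤ) * ∑ t, (w t : ℤ) * k t = 0 := by
      rw [Finset.mul_sum, Finset.sum_congr rfl fun t _ => by rw [mul_left_comm, ← hk t],
        Finset.sum_congr rfl fun t _ => mul_sub _ _ _, Finset.sum_sub_distrib, hdegℤ, sub_self]
    exact (mul_eq_zero.mp this).resolve_left (by exact_mod_cast hn)
  have hν : (ν : K) ≠ 0 := ν.ne_zero
  calc ∏ t, x t ^ u t = ∏ t, x t ^ v t * (ν : K) ^ ((w t : ℤ) * k t) :=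
        Finset.prod_congr rfl fun t _ => by
          rw [zpow_mul, zpow_natCast]
          exact pow_eq_pow_mul_zpow hn (hx t) (h0 t) (hk t)
    _ = ∏ t, x t ^ v t := by
      rw [Finset.prod_mul_distrib, prod_zpow_eq_zpow_sum hν, hsum, zpow_zero, mul_one]

theorem Nat.ModEq.eq_of_pos_of_le {n a b : ℕ} (h : a ≡ b [MOD n]) (ha : 0 < a) (ha' : a ≤ n)
    (hb : 0 < b) (hb' : b ≤ n) : a = b := by
  have h' : a - 1 + 1 ≡ b - 1 + 1 [MOD n] := by rwa [Nat.sub_add_cancel ha, Nat.sub_add_cancel hb]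
  have := Nat.ModEq.add_right_cancel' 1 h' |>.eq_of_lt_of_lt (by omega) (by omega)
  omega

end General

section Frobenius

variable {F : Type} [Field F] {m : ℕ} {w : Fin (m + 1) → ℕ}

theorem wRel_of_mk_eq {x y : {v : Fin (m + 1) → AlgebraicClosure F // v ≠ 0}}
    (h : PW.mk F w x = PW.mk F w y) : wRel F w x y :=
  wRel_equivalence.eqvGen_iff.mp (Quot.eqvGen_exact h)

theorem exists_pow_card_eq_mul [Fintype F] {c : PW F w} (hc : c ∈ ratPts F w)
    {x : {v : Fin (m + 1) → AlgebraicClosure F // v ≠ 0}} (hx : PW.mk F w x = c) :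
    ∃ ν : (AlgebraicClosure F)ˣ, ∀ t, x.1 t ^ Fintype.card F = ν ^ w t * x.1 t := by
  obtain ⟨x₀, h₀, _, h₁⟩ := hc
  obtain ⟨l, hl⟩ := wRel_of_mk_eq (h₀.trans hx.symm)
  obtain ⟨μ, hμ⟩ := wRel_of_mk_eq (h₀.trans h₁.symm)
  obtain ⟨p, hp⟩ := Nat.exists_eq_add_one.mpr (Fintype.card_pos (α := F))
  refine ⟨l ^ p * μ, fun t => ?_⟩
  have hμt : x₀.1 t ^ (p + 1) = μ ^ w t * x₀.1 t := hp ▸ hμ t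
  rw [hp, hl t, mul_pow, hμt]
  push_cast
  ring

end Frobenius

section Monomials

variable {F : Type} [Field F] {m : ℕ} {w : Fin (m + 1) → ℕ}

theorem wdeg_eq_weight (a : Fin (m + 1) →₀ ℕ) : wdeg w a = Finsupp.weight w a := by
  simp [wdeg, Finsupp.weight_eq_sum, mul_comm]

theorem mul_le_wdeg (a : Fin (m + 1) →₀ ℕ) (i : Fin (m + 1)) : w i * a i ≤ wdeg w a :=
  Finset.single_le_sum (f := fun t => w t * a t) (fun _ _ => Nat.zero_le _) (Finset.mem_univ i)

theorem eq_of_wdeg_eq_of_forall_ne {a b : Fin (m + 1) →₀ ℕ} (hdeg : wdeg w a = wdeg w b)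
    {i : Fin (m + 1)} (hwi : w i ≠ 0) (h : ∀ t, t ≠ i → a t = b t) : a = b := by
  classical
  have hrest : ∑ t ∈ Finset.univ.erase i, w t * a t = ∑ t ∈ Finset.univ.erase i, w t * b t :=
    Finset.sum_congr rfl fun t ht => by rw [h t (Finset.ne_of_mem_erase ht)]
  rw [wdeg, wdeg, ← Finset.add_sum_erase _ _ (Finset.mem_univ i),
    ← Finset.add_sum_erase _ _ (Finset.mem_univ i), hrest, add_left_inj] at hdeg
  ext t
  by_cases ht : t = i
  · exact ht ▸ Nat.eq_of_mul_eq_mul_left (Nat.pos_of_ne_zero hwi) hdeg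
  · exact h t ht

theorem dlexLt_irrefl (a : Fin (m + 1) →₀ ℕ) : ¬ dlexLt w a a := by
  rintro (h | ⟨-, i, h, -⟩) <;> exact lt_irrefl _ h

theorem dlexLt_or_dlexLt_of_ne {u v : Fin (m + 1) →₀ ℕ} (hne : u ≠ v)
    (hdeg : wdeg w u = wdeg w v) : dlexLt w u v ∨ dlexLt w v u := by
  classical
  obtain ⟨i, hi, hmax⟩ : ∃ i, u i ≠ v i ∧ ∀ j, i < j → u j = v j := by
    have hs : (Finset.univ.filter fun t => u t ≠ v t).Nonempty := by
      obtain ⟨t, ht⟩ := Finsupp.ne_iff.mp hne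
      exact ⟨t, by simpa using ht⟩
    refine ⟨_, (Finset.mem_filter.mp (Finset.max'_mem _ hs)).2, fun j hj => ?_⟩
    by_contra h
    exact (Finset.le_max' _ j (by simpa using h)).not_gt hj
  rcases hi.lt_or_gt with h | h
  · exact .inl (.inr ⟨hdeg, i, h, hmax⟩)
  · exact .inr (.inr ⟨hdeg.symm, i, h, fun j hj => (hmax j hj).symm⟩)

theorem isInitial_monomial_sub_monomial {u v : Fin (m + 1) →₀ ℕ} (hvu : dlexLt w v u) :
    IsInitial F w (monomial u 1 - monomial v 1) u := by
  classical
  have hne : u ≠ v := fun h => dlexLt_irrefl v (h ▸ hvu)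
  refine ⟨by simp [coeff_monomial, hne.symm], fun b hb hbu => ?_⟩
  obtain rfl : b = v := by
    by_contra hbv
    simp [coeff_monomial, Ne.symm hbu, Ne.symm hbv] at hb
  exact hvu

end Monomials

section Mbar

variable {F : Type} [Field F] [Fintype F] {m : ℕ} {w : Fin (m + 1) → ℕ}

theorem monomial_sub_monomial_vanishes (hq : 2 ≤ Fintype.card F) {u v : Fin (m + 1) →₀ ℕ}
    (h0 : ∀ t, u t = 0 ↔ v t = 0) (hmod : ∀ t, u t ≡ v t [MOD Fintype.card F - 1])
    (hdeg : wdeg w u = wdeg w v) {c : PW F w} (hc : c ∈ ratPts F w)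
    {x : {v : Fin (m + 1) → AlgebraicClosure F // v ≠ 0}} (hx : PW.mk F w x = c) :
    eval x.1 (map (algebraMap F (AlgebraicClosure F)) (monomial u 1 - monomial v 1)) = 0 := by
  obtain ⟨ν, hν⟩ := exists_pow_card_eq_mul hc hx
  have hq' : Fintype.card F = Fintype.card F - 1 + 1 := by omega
  rw [hq'] at hν
  simp only [map_sub, map_monomial, map_one, eval_monomial, one_mul, Finsupp.prod_fintype _ _
    (fun _ => pow_zero _)]
  rw [prod_pow_eq_prod_pow_of_modEq (by omega) w x.1 ν hν h0 hmod hdeg, sub_self]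

theorem notMem_Mbar_of_le (hq : 2 ≤ Fintype.card F) {u v : Fin (m + 1) →₀ ℕ}
    (h0 : ∀ t, u t = 0 ↔ v t = 0) (hmod : ∀ t, u t ≡ v t [MOD Fintype.card F - 1])
    (hdeg : wdeg w u = wdeg w v) (hvu : dlexLt w v u) {b : Fin (m + 1) →₀ ℕ} (hub : u ≤ b) :
    b ∉ Mbar F w := by
  have hhom : IsWeightedHomogeneous w (monomial u (1 : F) - monomial v 1) (wdeg w u) :=
    (isWeightedHomogeneous_monomial _ _ _ (wdeg_eq_weight u).symm).sub
      (isWeightedHomogeneous_monomial _ _ _ ((wdeg_eq_weight v).symm.trans hdeg.symm))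
  have hinit := isInitial_monomial_sub_monomial (F := F) hvu
  exact fun hb => hb ⟨_, ne_zero_iff.mpr ⟨u, mem_support_iff.mp hinit.1⟩,
    Ideal.subset_span ⟨⟨_, hhom⟩, fun c hc x hx => monomial_sub_monomial_vanishes hq h0 hmod hdeg
      hc hx⟩, ⟨_, hhom⟩, u, hinit, hub⟩

theorem eq_of_residueClass_eq (hq : 2 ≤ Fintype.card F) {b b' : Fin (m + 1) →₀ ℕ}
    (hb : b ∈ Mbar F w) (hb' : b' ∈ Mbar F w) (hdeg : wdeg w b = wdeg w b')
    (h : residueClass (Fintype.card F - 1) b = residueClass (Fintype.card F - 1) b') :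
    b = b' := by
  obtain ⟨h0, hmod⟩ := residueClass_eq_iff.mp h
  by_contra hne
  rcases dlexLt_or_dlexLt_of_ne hne hdeg with hlt | hlt
  · exact notMem_Mbar_of_le hq (fun t => (h0 t).symm) (fun t => (hmod t).symm) hdeg.symm hlt
      le_rfl hb'
  · exact notMem_Mbar_of_le hq h0 hmod hdeg hlt le_rfl hb

/-- `x_i x_j^q` is the initial monomial of `x_i x_j^q - x_i^(1 + w_j (q-1)) x_j`, which vanishes on
`ℙ(w)(𝔽_q)` when `w_i = 1`. -/
theorem lt_card_of_mem_Mbar (hq : 2 ≤ Fintype.card F) {b : Fin (m + 1) →₀ ℕ} (hb : b ∈ Mbar F w)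
    {i j : Fin (m + 1)} (hij : i < j) (hwi : w i = 1) (hbi : b i ≠ 0) :
    b j < Fintype.card F := by
  obtain ⟨p, hp⟩ : ∃ p, Fintype.card F = p + 1 := Nat.exists_eq_add_one.mpr (by omega)
  rw [hp]
  by_contra! hbj
  have hji : j ≠ i := hij.ne'
  set u : Fin (m + 1) →₀ ℕ := Finsupp.single i 1 + Finsupp.single j (p + 1)
  set v : Fin (m + 1) →₀ ℕ := Finsupp.single i (1 + w j * p) + Finsupp.single j 1
  have hu : ∀ t, u t = if t = i then 1 else if t = j then p + 1 else 0 := fun t => by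
    by_cases hti : t = i <;> by_cases htj : t = j <;> simp_all [u, Finsupp.single_apply, eq_comm]
  have hv : ∀ t, v t = if t = i then 1 + w j * p else if t = j then 1 else 0 := fun t => by
    by_cases hti : t = i <;> by_cases htj : t = j <;> simp_all [v, Finsupp.single_apply, eq_comm]
  have hdeg : wdeg w u = wdeg w v := by
    simp only [u, v, wdeg_eq_weight, map_add, Finsupp.weight_single, smul_eq_mul, hwi]
    ring
  refine notMem_Mbar_of_le (u := u) (v := v) hq (fun t => ?_) (fun t => ?_) hdeg
    (.inr ⟨hdeg.symm, j, ?_, fun t ht => ?_⟩) (fun t => ?_) hb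
  · rw [hu, hv]; split_ifs <;> simp
  · rw [hu, hv, hp, Nat.add_sub_cancel]
    split_ifs
    · exact (Nat.modEq_zero_iff_dvd.mpr (dvd_mul_left p (w j))).add_left 1 |>.symm
    · exact ((Nat.modEq_iff_dvd' (by omega)).mpr (by simp)).symm
    · rfl
  · rw [hu, hv, if_neg hji, if_neg hji, if_pos rfl, if_pos rfl]; omega
  · rw [hu, hv, if_neg (hij.trans ht).ne', if_neg ht.ne', if_neg (hij.trans ht).ne', if_neg ht.ne']
  · rw [hu]; split_ifs <;> subst_vars <;> omega

end Mbar

section Counting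

open Finset

variable {ι : Type*}

theorem natCast_finset_gcd (s : Finset ι) (w : ι → ℕ) :
    ((s.gcd w : ℕ) : ℤ) = s.gcd fun j => (w j : ℤ) := by
  classical
  induction s using Finset.induction_on with
  | empty => simp
  | insert a s ha ih =>
    rw [gcd_insert, gcd_insert, ← ih, ← Int.coe_gcd, Int.gcd_natCast_natCast]
    rfl

theorem eq_of_natCast_mul_eq {n g t t' : ℕ} (hg : g ≠ 0) (ht : t < n) (ht' : t' < n)
    (h : ((t * g : ℕ) : ZMod (n * g)) = ((t' * g : ℕ) : ZMod (n * g))) : t = t' :=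
  (((ZMod.natCast_eq_natCast_iff _ _ _).mp h).mul_right_cancel' hg).eq_of_lt_of_lt ht ht'

/-- `W` times a lift of `x`; independent of the lift once `M ∣ n W`. -/
def scaledLift (n M W : ℕ) (x : ZMod n) : ZMod M := ((W * x.val : ℕ) : ZMod M)

section ScaledLift

variable {n M W : ℕ} [NeZero n]

theorem scaledLift_intCast (h : M ∣ n * W) (c : ℤ) :
    scaledLift n M W c = ((W * c : ℤ) : ZMod M) := by
  rw [scaledLift, ← Int.cast_natCast, ZMod.intCast_eq_intCast_iff]
  push_cast
  rw [ZMod.val_intCast]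
  exact Int.ModEq.of_dvd (by rw [mul_comm] at h; exact_mod_cast h) (Int.mod_modEq c n).mul_left'

theorem scaledLift_natCast (h : M ∣ n * W) (u : ℕ) :
    scaledLift n M W u = ((W * u : ℕ) : ZMod M) := by
  simpa using scaledLift_intCast h u

theorem scaledLift_add (h : M ∣ n * W) (x y : ZMod n) :
    scaledLift n M W (x + y) = scaledLift n M W x + scaledLift n M W y := by
  rw [← ZMod.natCast_zmod_val x, ← ZMod.natCast_zmod_val y, ← Nat.cast_add,
    scaledLift_natCast h, scaledLift_natCast h, scaledLift_natCast h, mul_add, Nat.cast_add]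

end ScaledLift

variable (n : ℕ) [NeZero n]

/-- The weighted degree `∑_{j ∈ S} w_j r_j` of a residue vector, well defined modulo
`n · gcd_{j ∈ S} w_j`. -/
def weightedResidueSum (w : ι → ℕ) (S : Finset ι) : (ι → ZMod n) →+ ZMod (n * S.gcd w) where
  toFun r := ∑ j ∈ S, scaledLift n (n * S.gcd w) (w j) (r j)
  map_zero' := by simp [scaledLift]
  map_add' r r' := by
    rw [← sum_add_distrib]
    exact sum_congr rfl fun j hj => scaledLift_add (mul_dvd_mul_left n (gcd_dvd hj)) _ _

theorem weightedResidueSum_residueClass (w : ι → ℕ) (b : ι →₀ ℕ) :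
    weightedResidueSum n w b.support (residueClass n b).2 = Finsupp.weight w b := by
  simp only [weightedResidueSum, AddMonoidHom.coe_mk, ZeroHom.coe_mk, residueClass]
  rw [sum_congr rfl fun j hj => scaledLift_natCast (mul_dvd_mul_left n (gcd_dvd hj)) (b j),
    Finsupp.weight_apply, Finsupp.sum, Nat.cast_sum]
  simp [mul_comm]

theorem gcd_support_ne_zero {w : ι → ℕ} {b : ι →₀ ℕ} (h : Finsupp.weight w b ≠ 0) :
    b.support.gcd w ≠ 0 := fun hg => h <| by
  rw [Finsupp.weight_apply, Finsupp.sum]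
  exact sum_eq_zero fun j hj => by rw [gcd_eq_zero_iff.mp hg j hj, smul_zero]

variable [Fintype ι] [DecidableEq ι]

def residuesOn (S : Finset ι) : Finset (ι → ZMod n) :=
  Fintype.piFinset fun j => if j ∈ S then univ else {0}

variable {n}

theorem mem_residuesOn {S : Finset ι} {r : ι → ZMod n} :
    r ∈ residuesOn n S ↔ ∀ j ∉ S, r j = 0 := by
  simp only [residuesOn, Fintype.mem_piFinset]
  refine forall_congr' fun j => ?_
  split_ifs with hj <;> simp [hj]

theorem card_residuesOn (S : Finset ι) : #(residuesOn n S) = n ^ #S := by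
  simp [residuesOn, Fintype.card_piFinset, apply_ite, prod_ite_mem, ZMod.card]

theorem exists_weightedResidueSum_eq_gcd (w : ι → ℕ) (S : Finset ι) :
    ∃ r ∈ residuesOn n S, weightedResidueSum n w S r = S.gcd w := by
  obtain ⟨g, hg⟩ := S.gcd_eq_sum_mul fun j => (w j : ℤ)
  refine ⟨fun j => if j ∈ S then (g j : ZMod n) else 0, mem_residuesOn.mpr fun j hj => by simp [hj],
    ?_⟩
  simp only [weightedResidueSum, AddMonoidHom.coe_mk, ZeroHom.coe_mk]
  rw [sum_congr rfl fun j hj => by rw [if_pos hj, scaledLift_intCast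
    (mul_dvd_mul_left n (gcd_dvd hj))], ← Int.cast_sum, ← hg, ← natCast_finset_gcd,
    Int.cast_natCast]

/-- The `n` translates `r ↦ r + t r₀` (`t < n`), where `r₀` has weighted residue sum
`gcd(w_j : j ∈ S)`, carry a fiber of the weighted residue sum injectively into distinct fibers. -/
theorem card_filter_weightedResidueSum_eq_le (w : ι → ℕ) {S : Finset ι} (hS : S.gcd w ≠ 0)
    (c : ZMod (n * S.gcd w)) :
    #{r ∈ residuesOn n S | weightedResidueSum n w S r = c} ≤ n ^ (#S - 1) := by
  obtain ⟨r₀, hr₀S, hr₀⟩ := exists_weightedResidueSum_eq_gcd (n := n) w S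
  have hSne : S.Nonempty := nonempty_iff_ne_empty.mpr fun h => hS (h ▸ gcd_empty)
  have key : n * #{r ∈ residuesOn n S | weightedResidueSum n w S r = c} ≤ n ^ #S := calc
    _ = #(range n ×ˢ {r ∈ residuesOn n S | weightedResidueSum n w S r = c}) := by simp
    _ ≤ #(residuesOn n S) := by
      refine card_le_card_of_injOn (fun p => p.2 + p.1 • r₀) (fun p hp => ?_) ?_
      · simp only [coe_product, Set.mem_prod, mem_coe, mem_filter, mem_residuesOn] at hp ⊢
        intro j hj
        simp [hp.2.1 j hj, mem_residuesOn.mp hr₀S j hj]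
      · rintro ⟨t, r⟩ hp ⟨t', r'⟩ hp' heq
        simp only [coe_product, Set.mem_prod, mem_coe, mem_range, mem_filter] at hp hp' heq
        have hsum := congrArg (weightedResidueSum n w S) heq
        rw [map_add, map_add, map_nsmul, map_nsmul, hr₀, hp.2.2, hp'.2.2, add_right_inj] at hsum
        obtain rfl : t = t' := eq_of_natCast_mul_eq hS hp.1 hp'.1 (by simpa using hsum)
        simpa using heq
    _ = n ^ #S := card_residuesOn S
  rw [← Nat.sub_one_add_one (card_ne_zero.mpr hSne), pow_succ'] at key
  exact Nat.le_of_mul_le_mul_left key (Nat.pos_of_ne_zero (NeZero.ne n))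

variable (n) in
theorem sum_erase_empty_pow_card_sub_one :
    ∑ S ∈ (univ : Finset (Finset ι)).erase ∅, n ^ (#S - 1) =
      ∑ i ∈ range (Fintype.card ι), (n + 1) ^ i := by
  refine Nat.eq_of_mul_eq_mul_left (Nat.pos_of_ne_zero (NeZero.ne n)) ?_
  have hshift : n * ∑ S ∈ (univ : Finset (Finset ι)).erase ∅, n ^ (#S - 1) =
      ∑ S ∈ (univ : Finset (Finset ι)).erase ∅, n ^ #S := by
    rw [mul_sum]
    refine sum_congr rfl fun S hS => ?_
    rw [← pow_succ', Nat.sub_one_add_one (card_ne_zero.mpr (nonempty_iff_ne_empty.mpr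
      (ne_of_mem_erase hS)))]
  have hbinom :
      ∑ S ∈ (univ : Finset (Finset ι)).erase ∅, n ^ #S + 1 = (n + 1) ^ Fintype.card ι := by
    have := sum_pow_mul_eq_add_pow n 1 (univ : Finset ι)
    simp only [one_pow, mul_one, powerset_univ, card_univ] at this
    rw [← this, ← sum_erase_add _ _ (mem_univ ∅), card_empty, pow_zero]
  have hgeom := geom_sum_mul_add n (Fintype.card ι)
  rw [hshift]
  linarith

variable (n) in
theorem ncard_image_residueClass_le {d : ℕ} (hd : d ≠ 0) (w : ι → ℕ) :
    (residueClass n '' {b : ι →₀ ℕ | Finsupp.weight w b = d}).ncard ≤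
      ∑ i ∈ range (Fintype.card ι), (n + 1) ^ i := by
  set C := residueClass n '' {b : ι →₀ ℕ | Finsupp.weight w b = d}
  have hC : C.Finite := Set.toFinite C
  have hmem : ∀ S p, p ∈ {p ∈ hC.toFinset | p.1 = S} ↔
      ∃ b : ι →₀ ℕ, Finsupp.weight w b = d ∧ b.support = S ∧ residueClass n b = p := by
    intro S p
    simp only [mem_filter, Set.Finite.mem_toFinset, C, Set.mem_image, Set.mem_ofPred_eq]
    constructor
    · rintro ⟨⟨b, hb, rfl⟩, rfl⟩
      exact ⟨b, hb, rfl, rfl⟩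
    · rintro ⟨b, hb, rfl, rfl⟩
      exact ⟨⟨b, hb, rfl⟩, rfl⟩
  rw [Set.ncard_eq_toFinset_card C hC, card_eq_sum_card_fiberwise (f := Prod.fst)
    (t := univ.erase ∅), ← sum_erase_empty_pow_card_sub_one n]
  · refine sum_le_sum fun S _ => ?_
    by_cases hS : S.gcd w = 0
    · refine (card_eq_zero.mpr (eq_empty_of_forall_notMem fun p hp => ?_)).trans_le (Nat.zero_le _)
      obtain ⟨b, hb, rfl, -⟩ := (hmem _ p).mp hp
      exact gcd_support_ne_zero (hb ▸ hd) hS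
    refine (card_le_card_of_injOn Prod.snd (fun p hp => ?_) fun p hp p' hp' h => ?_).trans
      (card_filter_weightedResidueSum_eq_le w hS d)
    · obtain ⟨b, hb, rfl, rfl⟩ := (hmem _ p).mp hp
      simp only [coe_filter, Set.mem_ofPred_eq, mem_residuesOn, weightedResidueSum_residueClass, hb]
      exact ⟨fun j hj => by simp [residueClass, Finsupp.notMem_support_iff.mp hj], trivial⟩
    · obtain ⟨b, -, rfl, rfl⟩ := (hmem _ p).mp hp
      obtain ⟨b', -, hb', rfl⟩ := (hmem _ p').mp hp'
      exact Prod.ext hb'.symm h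
  · intro p hp
    obtain ⟨b, hb, rfl⟩ := (Set.Finite.mem_toFinset hC).mp hp
    refine mem_erase.mpr ⟨fun h => gcd_support_ne_zero (w := w) (hb ▸ hd) ?_, mem_univ _⟩
    simp [residueClass] at h
    simp [h]

end Counting

section Regularity

variable {F : Type} [Field F] [Fintype F] {m : ℕ} {w : Fin (m + 1) → ℕ} {dtil : ℕ}

theorem finite_MbarD_of_mem_regSet (hreg : dtil ∈ regSet F w) : (MbarD F w dtil).Finite :=
  Set.finite_of_ncard_ne_zero (by simp [hreg.2, pSum, Finset.sum_range_succ'])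

/-- `M̄_{d̃}` injects into the residue classes of degree `d̃`, of which there are at most
`p_m = |M̄_{d̃}|`. -/
theorem exists_mem_MbarD_residueClass_eq (hreg : dtil ∈ regSet F w) {b : Fin (m + 1) →₀ ℕ}
    (hb : wdeg w b = dtil) :
    ∃ b' ∈ MbarD F w dtil,
      residueClass (Fintype.card F - 1) b' = residueClass (Fintype.card F - 1) b := by
  have hq : 2 ≤ Fintype.card F := Fintype.one_lt_card
  have : NeZero (Fintype.card F - 1) := ⟨by omega⟩
  set C := residueClass (Fintype.card F - 1) '' {b : Fin (m + 1) →₀ ℕ | Finsupp.weight w b = dtil}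
  have hsub : residueClass (Fintype.card F - 1) '' MbarD F w dtil ⊆ C :=
    Set.image_mono fun b hb => (wdeg_eq_weight b).symm.trans hb.2
  have hinj : Set.InjOn (residueClass (Fintype.card F - 1)) (MbarD F w dtil) :=
    fun b hb b' hb' => eq_of_residueClass_eq hq hb.1 hb'.1 (hb.2.trans hb'.2.symm)
  have hcard : C.ncard ≤ (MbarD F w dtil).ncard := by
    have := ncard_image_residueClass_le (Fintype.card F - 1) (by have := hreg.1; omega) w
      (d := dtil)
    rwa [Fintype.card_fin, Nat.sub_add_cancel (by omega), ← pSum, ← hreg.2] at this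
  have heq := Set.eq_of_subset_of_ncard_le hsub
    (by rwa [hinj.ncard_image]) (Set.toFinite C)
  have hbC : residueClass (Fintype.card F - 1) b ∈ C := ⟨b, (wdeg_eq_weight b).symm.trans hb, rfl⟩
  rw [← heq] at hbC
  exact hbC

theorem mem_MbarDI_iff (hreg : dtil ∈ regSet F w) {i : Fin (m + 1)} (hwi : w i = 1)
    {b : Fin (m + 1) →₀ ℕ} :
    b ∈ MbarDI F w dtil i ↔
      wdeg w b = dtil ∧ (∀ t, t < i → b t = 0) ∧ 1 ≤ b i ∧ ∀ j, i < j → b j < Fintype.card F := by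
  have hq : 2 ≤ Fintype.card F := Fintype.one_lt_card
  constructor
  · rintro ⟨⟨hbM, hdeg⟩, hz, hbi⟩
    exact ⟨hdeg, hz, hbi, fun j hj => lt_card_of_mem_Mbar hq hbM hj hwi (by omega)⟩
  rintro ⟨hdeg, hz, hbi, hlt⟩
  obtain ⟨b', hb', hcls⟩ := exists_mem_MbarD_residueClass_eq hreg hdeg
  obtain ⟨h0, hmod⟩ := residueClass_eq_iff.mp hcls
  have hbi' : b' i ≠ 0 := fun h => by have := (h0 i).mp h; omega
  have hlt' : ∀ j, i < j → b' j < Fintype.card F := fun j hj =>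
    lt_card_of_mem_Mbar hq hb'.1 hj hwi hbi'
  obtain rfl : b' = b := by
    refine eq_of_wdeg_eq_of_forall_ne (hb'.2.trans hdeg.symm) (i := i) (by omega) fun t hti => ?_
    rcases hti.lt_or_gt with ht | ht
    · rw [(h0 t).mpr (hz t ht), hz t ht]
    · by_cases hbt : b t = 0
      · rw [(h0 t).mpr hbt, hbt]
      · exact (hmod t).eq_of_pos_of_le (Nat.pos_of_ne_zero (mt (h0 t).mp hbt))
          (by have := hlt' t ht; omega) (Nat.pos_of_ne_zero hbt) (by have := hlt t ht; omega)
  exact ⟨hb', hz, hbi⟩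

end Regularity

section TailCount

open Finset

variable {m : ℕ} {w : Fin (m + 1) → ℕ} {i : Fin (m + 1)} {a : Fin (m + 1) →₀ ℕ}

theorem card_piFinset_ite_Icc (i : Fin (m + 1)) (a : Fin (m + 1) →₀ ℕ) (N : ℕ) :
    #(Fintype.piFinset fun j => if i < j then Icc (a j) N else {0}) =
      ∏ j ∈ univ.filter (i < ·), (N + 1 - a j) := by
  rw [Fintype.card_piFinset, prod_filter]
  exact prod_congr rfl fun j _ => by split_ifs <;> simp

def fillAt (w : Fin (m + 1) → ℕ) (i : Fin (m + 1)) (dtil : ℕ) (c : Fin (m + 1) → ℕ) :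
    Fin (m + 1) →₀ ℕ :=
  Finsupp.equivFunOnFinite.symm c + Finsupp.single i (dtil - ∑ j, w j * c j)

theorem fillAt_apply (dtil : ℕ) (c : Fin (m + 1) → ℕ) (t : Fin (m + 1)) :
    fillAt w i dtil c t = c t + if i = t then dtil - ∑ j, w j * c j else 0 := by
  simp only [fillAt, Finsupp.add_apply, Finsupp.coe_equivFunOnFinite_symm, Finsupp.single_apply]

theorem wdeg_fillAt (hwi : w i = 1) {dtil : ℕ} {c : Fin (m + 1) → ℕ} (hc : ∑ j, w j * c j ≤ dtil) :
    wdeg w (fillAt w i dtil c) = dtil := by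
  rw [wdeg_eq_weight, fillAt, map_add, Finsupp.weight_single, hwi, ← wdeg_eq_weight, smul_eq_mul,
    mul_one, wdeg, Finsupp.coe_equivFunOnFinite_symm]
  omega

theorem eq_equivFunOnFinite_symm_add_single {b : Fin (m + 1) →₀ ℕ} (hz : ∀ t, t < i → b t = 0) :
    b = Finsupp.equivFunOnFinite.symm (fun j => if i < j then b j else 0) +
      Finsupp.single i (b i) := by
  ext t
  rcases lt_trichotomy t i with ht | rfl | ht
  · simp [ht.ne, not_lt_of_gt ht, hz t ht]
  · simp
  · simp [ht, ht.ne']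

theorem fillAt_tail {dtil : ℕ} {b : Fin (m + 1) →₀ ℕ} (hwi : w i = 1) (hdeg : wdeg w b = dtil)
    (hz : ∀ t, t < i → b t = 0) : fillAt w i dtil (fun j => if i < j then b j else 0) = b := by
  have hsplit := eq_equivFunOnFinite_symm_add_single hz
  have htail : ∑ j, w j * (if i < j then b j else 0) + b i = dtil := by
    conv_rhs => rw [← hdeg, hsplit]
    rw [wdeg_eq_weight, map_add, Finsupp.weight_single, hwi, smul_eq_mul, mul_one, ← wdeg_eq_weight,
      wdeg, Finsupp.coe_equivFunOnFinite_symm]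
  rw [fillAt, ← htail, Nat.add_sub_cancel_left, ← hsplit]

theorem ncard_setOf_wdeg_eq_le (hwi : w i = 1) (ha : ∀ t, t < i → a t = 0) {N dtil : ℕ}
    (hlarge : a i + ∑ j, w j * N < dtil) :
    {b : Fin (m + 1) →₀ ℕ | (wdeg w b = dtil ∧ (∀ t, t < i → b t = 0) ∧ 1 ≤ b i ∧
      ∀ j, i < j → b j ≤ N) ∧ a ≤ b}.ncard = ∏ j ∈ univ.filter (i < ·), (N + 1 - a j) := by
  set B : Finset (Fin (m + 1) → ℕ) := Fintype.piFinset fun j => if i < j then Icc (a j) N else {0}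
  have hB : ∀ c, c ∈ B ↔ ∀ j, (i < j → a j ≤ c j ∧ c j ≤ N) ∧ (¬ i < j → c j = 0) := fun c => by
    simp only [B, Fintype.mem_piFinset]
    refine forall_congr' fun j => ?_
    split_ifs with h <;> simp [h]
  have hinj : Set.InjOn (fillAt w i dtil) B := fun c hc c' hc' h => funext fun t => by
    have := congrArg (· t) h
    simp only [fillAt_apply] at this
    by_cases ht : t = i
    · subst ht
      rw [((hB c).mp hc t).2 (lt_irrefl t), ((hB c').mp hc' t).2 (lt_irrefl t)]
    · simpa [Ne.symm ht] using this
  suffices hset : {b : Fin (m + 1) →₀ ℕ | (wdeg w b = dtil ∧ (∀ t, t < i → b t = 0) ∧ 1 ≤ b i ∧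
      ∀ j, i < j → b j ≤ N) ∧ a ≤ b} = fillAt w i dtil '' B by
    rw [hset, hinj.ncard_image, Set.ncard_coe_finset, card_piFinset_ite_Icc]
  ext b
  constructor
  · rintro ⟨⟨hdeg, hz, -, hle⟩, hab⟩
    refine ⟨fun j => if i < j then b j else 0,
      (hB _).mpr fun j => ⟨fun hj => ?_, fun hj => if_neg hj⟩, fillAt_tail hwi hdeg hz⟩
    simp only [if_pos hj]
    exact ⟨hab j, hle j hj⟩
  · rintro ⟨c, hc, rfl⟩
    have hc' := (hB c).mp hc
    have hdc : ∑ j, w j * c j ≤ ∑ j, w j * N := sum_le_sum fun j _ => Nat.mul_le_mul_left _ <| by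
      by_cases hj : i < j
      · exact ((hc' j).1 hj).2
      · exact ((hc' j).2 hj).trans_le (Nat.zero_le _)
    refine ⟨⟨wdeg_fillAt hwi (by omega), fun t ht => ?_, ?_, fun j hj => ?_⟩, fun t => ?_⟩
    · rw [fillAt_apply, if_neg ht.ne', (hc' t).2 (not_lt_of_gt ht)]
    · rw [fillAt_apply, if_pos rfl]
      omega
    · rw [fillAt_apply, if_neg hj.ne, add_zero]
      exact ((hc' j).1 hj).2
    · rw [fillAt_apply]
      rcases lt_trichotomy t i with ht | rfl | ht
      · simp [ha t ht]
      · rw [if_pos rfl]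
        omega
      · rw [if_neg ht.ne]
        exact ((hc' t).1 ht).1.trans (Nat.le_add_right _ _)

end TailCount

section FootprintBound

open Finset

variable {F : Type} [Field F] [Fintype F] {m : ℕ} {w : Fin (m + 1) → ℕ} {dtil : ℕ}
  {a : Fin (m + 1) →₀ ℕ} {j0 : Fin (m + 1)}

theorem FBi_eq_zero_of_lt (haj0 : 1 ≤ a j0) {i : Fin (m + 1)} (hi : j0 < i) :
    FBi F w dtil i a = 0 := by
  have hempty : {b | b ∈ MbarDI F w dtil i ∧ a ≤ b} = ∅ :=
    Set.eq_empty_of_forall_notMem fun b ⟨⟨_, hz, _⟩, hab⟩ => by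
      have := hab j0
      have := hz j0 hi
      omega
  rw [FBi, hempty, Set.ncard_empty]

theorem FB_eq_sum_FBi (hfin : (MbarD F w dtil).Finite) (haj0 : 1 ≤ a j0) :
    FB F w dtil a = ∑ i ∈ univ.filter (· ≤ j0), FBi F w dtil i a := by
  set A := hfin.toFinset.filter (a ≤ ·)
  -- `j0` is inserted only to make `min'` total; on `A` it already lies in the support.
  set lowest : (Fin (m + 1) →₀ ℕ) → Fin (m + 1) := fun b =>
    (insert j0 b.support).min' (insert_nonempty _ _)
  have hlowest : ∀ b ∈ A, ∀ i, lowest b = i ↔ (∀ t, t < i → b t = 0) ∧ 1 ≤ b i := by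
    intro b hb i
    have hj0 : j0 ∈ b.support := by
      have := (mem_filter.mp hb).2 j0
      simp only [Finsupp.mem_support_iff]
      omega
    simp only [lowest, insert_eq_of_mem hj0, min'_eq_iff, Finsupp.mem_support_iff]
    constructor
    · rintro ⟨hi, hmin⟩
      exact ⟨fun t ht => by_contra fun h => (hmin t h).not_gt ht, Nat.one_le_iff_ne_zero.mpr hi⟩
    · rintro ⟨hz, hi⟩
      exact ⟨by omega, fun t ht => not_lt.mp fun h => ht (hz t h)⟩
  have hFB : FB F w dtil a = #A := by
    rw [FB, ← Set.ncard_coe_finset]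
    congr 1
    ext b
    simp [A]
  rw [hFB, card_eq_sum_card_fiberwise (f := lowest) (t := univ.filter (· ≤ j0))
    fun b _ => by simpa using min'_le _ _ (mem_insert_self _ _)]
  refine sum_congr rfl fun i _ => ?_
  rw [FBi, ← Set.ncard_coe_finset]
  congr 1
  ext b
  simp only [coe_filter, Set.mem_ofPred_eq, MbarDI, MbarD]
  constructor
  · rintro ⟨hbA, hbi⟩
    obtain ⟨hz, hi⟩ := (hlowest b hbA i).mp hbi
    simp only [A, mem_filter, Set.Finite.mem_toFinset] at hbA
    exact ⟨⟨hbA.1, hz, hi⟩, hbA.2⟩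
  · rintro ⟨⟨hbM, hz, hi⟩, hab⟩
    have hbA : b ∈ A := mem_filter.mpr ⟨hfin.mem_toFinset.mpr hbM, hab⟩
    exact ⟨hbA, (hlowest b hbA i).mpr ⟨hz, hi⟩⟩

theorem FBi_eq_prod (hreg : dtil ∈ regSet F w) {i : Fin (m + 1)} (hwi : w i = 1)
    (ha : ∀ t, t < i → a t = 0) (hlarge : a i + ∑ j, w j * (Fintype.card F - 1) < dtil) :
    FBi F w dtil i a = ∏ j ∈ univ.filter (i < ·), (Fintype.card F - a j) := by
  have hq : 1 ≤ Fintype.card F := Fintype.card_pos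
  have hcount := ncard_setOf_wdeg_eq_le hwi ha hlarge
  rw [Nat.sub_add_cancel hq] at hcount
  rw [FBi, ← hcount]
  congr 1
  ext b
  simp only [Set.mem_ofPred_eq, mem_MbarDI_iff hreg hwi, Nat.lt_iff_le_pred hq]

end FootprintBound

/-- Lemma 2.10 of the paper: elementary properties of `FB_i`,
for `d̃ ∈ reg` sufficiently large relative to `d`. -/
theorem stmt7 (F : Type) [Field F] [Fintype F] (m ℓ : ℕ) (w : Fin (m + 1) → ℕ)
    (hℓ1 : 1 ≤ ℓ) (hℓm : ℓ + 1 ≤ m)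
    (d : ℕ) (j0 : Fin (m + 1)) (a : Fin (m + 1) →₀ ℕ)
    (ha : a ∈ MbarDI F w d j0) :
    ∃ N : ℕ, ∀ dtil ∈ regSet F w, N ≤ dtil →
      (∀ i : Fin (m + 1), (j0 : ℕ) + 1 ≤ (i : ℕ) → FBi F w dtil i a = 0) ∧
      (FB F w dtil a =
        ∑ i ∈ Finset.univ.filter (fun i : Fin (m + 1) => i ≤ j0), FBi F w dtil i a) ∧
      (d ≤ w ⟨1, by omega⟩ * Fintype.card F →
        ∀ i : Fin (m + 1), i ≤ j0 → (∀ t : Fin (m + 1), t ≤ i → w t = 1) →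
          FBi F w dtil i a =
            ∏ j ∈ Finset.univ.filter (fun j : Fin (m + 1) => i < j),
              (Fintype.card F - a j)) := by
  obtain ⟨⟨-, hadeg⟩, hazero, haj0⟩ := ha
  refine ⟨d + ∑ j, w j * (Fintype.card F - 1) + 1, fun dtil hreg hN =>
    ⟨fun i hi => FBi_eq_zero_of_lt haj0 (Fin.lt_def.mpr hi),
      FB_eq_sum_FBi (finite_MbarD_of_mem_regSet hreg) haj0,
      fun _ i hij0 hones => FBi_eq_prod hreg (hones i le_rfl)
        (fun t ht => hazero t (ht.trans_le hij0)) ?_⟩⟩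
  have := mul_le_wdeg (w := w) a i
  rw [hones i le_rfl, one_mul, hadeg] at this
  omega

end
end

section
/- Let (w_0, w_1) be positive integers with gcd(w_0, w_1) = 1, and let d ∈ ⟨w_0, w_1⟩_ℕ. Set δ = den(d; w_0, w_1) − 1. Then for every nonzero f ∈ 𝔽_q[x_0, x_1]^w_d: |V_{ℙ(w_0,w_1)}(f)(𝔽_q)| ≤ δ if both w_0 and w_1 divide d; |V_{ℙ(w_0,w_1)}(f)(𝔽_q)| ≤ δ + 1 if exactly one of w_0, w_1 divides d; and |V_{ℙ(w_0,w_1)}(f)(𝔽_q)| ≤ δ + 2 if neither w_0 nor w_1 divides d. -/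
open MvPolynomial

noncomputable section

/-!
Because `gcd(w0, w1) = 1`, the solutions of `w0 * a + w1 * b = d` form a progression
`(a0 + w1 * k, b0 + w0 * (N - k))`, `k ≤ N`; so `den(d; w0, w1) = N + 1`, `a0 = 0` if
`w1 ∣ d` and `b0 = 0` if `w0 ∣ d`. Hence `f = x0^a0 * x1^b0 * H(x0^w1, x1^w0)` for a nonzero
binary form `H` of degree `N`. By coprimality again, `[x0 : x1] ↦ x0^w1 / x1^w0` is injective
from `ℙ(w0, w1)(𝔽̄_q)` to `ℙ¹(𝔽̄_q)`, and it sends every zero of `f`, rational or not, to one of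
the at most `N` zeros of `H`, to `0` (possible only if `a0 > 0`) or to `∞` (only if `b0 > 0`).
-/

def SolutionsParametrized (w0 w1 d a0 b0 N : ℕ) : Prop :=
  ∀ a b : ℕ, w0 * a + w1 * b = d ↔ ∃ k ≤ N, a = a0 + w1 * k ∧ b = b0 + w0 * (N - k)

theorem solutionsParametrized_of_lt {w0 w1 a0 b0 N : ℕ} (h1 : 0 < w1)
    (hcop : Nat.gcd w0 w1 = 1) (ha0 : a0 < w1) (hb0 : b0 < w0) :
    SolutionsParametrized w0 w1 (w0 * a0 + w1 * b0 + w0 * w1 * N) a0 b0 N := by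
  refine fun a b => ⟨fun h => ?_, ?_⟩
  · have hmod : a % w1 = a0 := by
      rw [← Nat.mod_eq_of_lt ha0]
      refine Nat.ModEq.cancel_left_of_coprime (c := w0) (by rw [Nat.gcd_comm, hcop]) ?_
      have h' : w0 * a + w1 * b = w0 * a0 + w1 * (b0 + w0 * N) := by linear_combination h
      simpa [Nat.ModEq, Nat.mul_add_mod] using congrArg (· % w1) h'
    have ha := Nat.mod_add_div a w1
    rw [hmod] at ha
    have hb : b + w0 * (a / w1) = b0 + w0 * N :=
      Nat.eq_of_mul_eq_mul_left h1 (by linear_combination h + w0 * ha)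
    have hk : a / w1 ≤ N := by
      by_contra! hlt
      have := Nat.mul_le_mul_left w0 hlt
      rw [Nat.mul_succ] at this
      omega
    refine ⟨a / w1, hk, ha.symm, ?_⟩
    have := Nat.mul_le_mul_left w0 hk
    rw [Nat.mul_sub]
    omega
  · rintro ⟨k, hk, rfl, rfl⟩
    obtain ⟨m, rfl⟩ := Nat.exists_eq_add_of_le hk
    rw [Nat.add_sub_cancel_left]
    ring

theorem exists_solutionsParametrized {w0 w1 : ℕ} (h0 : 0 < w0) (h1 : 0 < w1)
    (hcop : Nat.gcd w0 w1 = 1) (p q : ℕ) :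
    ∃ a0 b0 N : ℕ, SolutionsParametrized w0 w1 (w0 * p + w1 * q) a0 b0 N := by
  set B := q + w0 * (p / w1)
  refine ⟨p % w1, B % w0, B / w0, ?_⟩
  convert solutionsParametrized_of_lt h1 hcop (Nat.mod_lt p h1) (Nat.mod_lt B h0) using 1
  linear_combination w0 * (Nat.mod_add_div p w1).symm + w1 * (Nat.mod_add_div B w0).symm

section SolutionsParametrized

variable {w0 w1 d a0 b0 N : ℕ}

theorem SolutionsParametrized.den_eq (hsol : SolutionsParametrized w0 w1 d a0 b0 N)
    (h1 : 0 < w1) : den w0 w1 d = N + 1 := by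
  have hset : {p : ℕ × ℕ | w0 * p.1 + w1 * p.2 = d} =
      (fun k => (a0 + w1 * k, b0 + w0 * (N - k))) '' Set.Iic N := by
    ext ⟨a, b⟩
    change w0 * a + w1 * b = d ↔ _
    rw [hsol a b]
    simp [eq_comm]
  have hinj : Function.Injective fun k => (a0 + w1 * k, b0 + w0 * (N - k)) := fun k l hkl => by
    simpa [h1.ne'] using congrArg Prod.fst hkl
  rw [den, hset, Set.ncard_image_of_injective _ hinj]
  simp

theorem SolutionsParametrized.offset_fst_eq_zero_of_dvd
    (hsol : SolutionsParametrized w0 w1 d a0 b0 N) (hd : w1 ∣ d) : a0 = 0 := by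
  obtain ⟨b, rfl⟩ := hd
  obtain ⟨k, -, hk, -⟩ := (hsol 0 b).mp (by ring)
  omega

theorem SolutionsParametrized.offset_snd_eq_zero_of_dvd
    (hsol : SolutionsParametrized w0 w1 d a0 b0 N) (hd : w0 ∣ d) : b0 = 0 := by
  obtain ⟨a, rfl⟩ := hd
  obtain ⟨k, -, -, hk⟩ := (hsol a 0).mp (by ring)
  omega

end SolutionsParametrized

noncomputable def progressionExponent (w0 w1 a0 b0 N k : ℕ) : Fin 2 →₀ ℕ :=
  Finsupp.single 0 (a0 + w1 * k) + Finsupp.single 1 (b0 + w0 * (N - k))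

theorem support_subset_image_progressionExponent {R : Type*} [CommSemiring R]
    {w0 w1 d a0 b0 N : ℕ} (hsol : SolutionsParametrized w0 w1 d a0 b0 N)
    {f : MvPolynomial (Fin 2) R} (hfh : IsWeightedHomogeneous ![w0, w1] f d) :
    f.support ⊆ (Finset.range (N + 1)).image (progressionExponent w0 w1 a0 b0 N) := by
  intro e he
  have hd := hfh (mem_support_iff.mp he)
  rw [Finsupp.weight_eq_sum, Fin.sum_univ_two] at hd
  obtain ⟨k, hk, h0, h1⟩ := (hsol (e 0) (e 1)).mp (by simpa [mul_comm] using hd)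
  refine Finset.mem_image.mpr ⟨k, Finset.mem_range_succ_iff.mpr hk, ?_⟩
  ext i
  fin_cases i <;> simp [progressionExponent, h0, h1]

theorem eval₂_eq_sum_progressionExponent {R S : Type*} [CommSemiring R] [CommSemiring S]
    {w0 w1 d a0 b0 N : ℕ} (h1 : 0 < w1) (hsol : SolutionsParametrized w0 w1 d a0 b0 N)
    {f : MvPolynomial (Fin 2) R} (hfh : IsWeightedHomogeneous ![w0, w1] f d)
    (φ : R →+* S) (x : Fin 2 → S) :
    eval₂ φ x f = ∑ k ∈ Finset.range (N + 1),
      φ (coeff (progressionExponent w0 w1 a0 b0 N k) f) *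
        (x 0 ^ (a0 + w1 * k) * x 1 ^ (b0 + w0 * (N - k))) := by
  have hinj : Function.Injective (progressionExponent w0 w1 a0 b0 N) := fun k l hkl => by
    simpa [progressionExponent, h1.ne'] using congrArg (· 0) hkl
  rw [eval₂_eq', Finset.sum_subset (support_subset_image_progressionExponent hsol hfh)
    (fun e _ he => by simp [notMem_support_iff.mp he]), Finset.sum_image hinj.injOn]
  refine Finset.sum_congr rfl fun k _ => ?_
  simp [progressionExponent, Fin.prod_univ_two]

theorem exists_unit_pow_mul_eq {K : Type*} [Field K] [IsAlgClosed K] {n : ℕ} (hn : 0 < n)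
    {a b : K} (ha : a ≠ 0) (hb : b ≠ 0) : ∃ l : Kˣ, b = (l : K) ^ n * a := by
  obtain ⟨z, hz⟩ := IsAlgClosed.exists_pow_nat_eq (b / a) hn
  have hz0 : z ≠ 0 := by
    rintro rfl
    exact div_ne_zero hb ha (by simpa [hn.ne'] using hz.symm)
  exact ⟨Units.mk0 z hz0, by simp [hz, ha]⟩

section LineCoord

variable {K : Type*} [Field K]

/-- `none` is the point `[1 : 0]` at infinity. -/
noncomputable def lineCoord (w0 w1 : ℕ) (v : Fin 2 → K) : Option K :=
  open Classical in if v 1 = 0 then none else some (v 0 ^ w1 / v 1 ^ w0)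

theorem lineCoord_smul (w0 w1 : ℕ) (l : Kˣ) (v : Fin 2 → K) :
    lineCoord w0 w1 (fun i => (l : K) ^ (![w0, w1] i) * v i) = lineCoord w0 w1 v := by
  by_cases hv : v 1 = 0
  · simp [lineCoord, hv]
  · simp only [lineCoord, Matrix.cons_val_zero, Matrix.cons_val_one, mul_eq_zero,
      pow_eq_zero_iff', Units.ne_zero, false_and, hv, or_self, if_false, Option.some.injEq]
    rw [mul_pow, mul_pow, ← pow_mul, ← pow_mul, mul_comm w1 w0]
    exact mul_div_mul_left _ _ (pow_ne_zero _ (Units.ne_zero _))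

theorem exists_unit_of_lineCoord_eq [IsAlgClosed K] {w0 w1 : ℕ} (h0 : 0 < w0) (h1 : 0 < w1)
    (hcop : Nat.gcd w0 w1 = 1) {u v : Fin 2 → K} (hu : u ≠ 0) (hv : v ≠ 0)
    (h : lineCoord w0 w1 v = lineCoord w0 w1 u) :
    ∃ l : Kˣ, ∀ i, u i = (l : K) ^ (![w0, w1] i) * v i := by
  have hne : ∀ x : Fin 2 → K, x ≠ 0 → x 1 = 0 → x 0 ≠ 0 := fun x hx hx1 hx0 =>
    hx (funext (Fin.forall_fin_two.mpr ⟨hx0, hx1⟩))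
  simp only [Fin.forall_fin_two, Matrix.cons_val_zero, Matrix.cons_val_one]
  by_cases hv1 : v 1 = 0
  · have hu1 : u 1 = 0 := by by_contra hu1; simp [lineCoord, hv1, hu1] at h
    obtain ⟨l, hl⟩ := exists_unit_pow_mul_eq h0 (hne v hv hv1) (hne u hu hu1)
    exact ⟨l, hl, by simp [hu1, hv1]⟩
  have hu1 : u 1 ≠ 0 := by intro hu1; simp [lineCoord, hv1, hu1] at h
  simp only [lineCoord, hv1, hu1, if_false, Option.some.injEq] at h
  by_cases hv0 : v 0 = 0
  · have hu0 : u 0 = 0 := by simpa [hv0, h1.ne', hu1] using h.symm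
    obtain ⟨l, hl⟩ := exists_unit_pow_mul_eq h1 hv1 hu1
    exact ⟨l, by simp [hu0, hv0], hl⟩
  have hu0 : u 0 ≠ 0 := by intro hu0; simp [hv0, hu0, h1.ne', hv1] at h
  obtain ⟨l, hl0, hl1⟩ := (pow_eq_pow_iff_of_coprime (a := u 0 / v 0) (b := u 1 / v 1)
    (Nat.coprime_comm.mp hcop)).mp (by
      rw [div_pow, div_pow, div_eq_div_iff (pow_ne_zero _ hv0) (pow_ne_zero _ hv1)]
      rw [div_eq_div_iff (pow_ne_zero _ hv1) (pow_ne_zero _ hu1)] at h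
      linear_combination -h)
  have hl : l ≠ 0 := by rintro rfl; simp [zero_pow h0.ne', hu0, hv0] at hl0
  exact ⟨Units.mk0 l hl, by simp [← hl0, hv0], by simp [← hl1, hv1]⟩

end LineCoord

noncomputable def PW.coord (F : Type) [Field F] (w0 w1 : ℕ) :
    PW F ![w0, w1] → Option (AlgebraicClosure F) :=
  Quot.lift (fun x => lineCoord w0 w1 x.1) fun _ _ ⟨l, hl⟩ => by
    simp only [funext hl, lineCoord_smul]

theorem PW.coord_injective (F : Type) [Field F] {w0 w1 : ℕ} (h0 : 0 < w0) (h1 : 0 < w1)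
    (hcop : Nat.gcd w0 w1 = 1) : Function.Injective (PW.coord F w0 w1) := by
  rintro ⟨x⟩ ⟨y⟩ h
  exact Quot.sound (exists_unit_of_lineCoord_eq h0 h1 hcop y.2 x.2 h)

theorem Polynomial.card_roots_toFinset_lt_of_coeff_eq_zero {R : Type*} [CommRing R]
    [IsDomain R] [DecidableEq R] {P : Polynomial R} (hP : P ≠ 0) {N : ℕ}
    (hN : P.natDegree ≤ N) (hc : P.coeff N = 0) : P.roots.toFinset.card < N := by
  have hroots : P.roots.toFinset.card ≤ P.natDegree :=
    (Multiset.toFinset_card_le _).trans (Polynomial.card_roots' P)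
  have : P.natDegree ≠ N := fun h =>
    hP (Polynomial.leadingCoeff_eq_zero.mp (by rw [Polynomial.leadingCoeff, h, hc]))
  omega

section PolyOfCoeffs

open Polynomial

variable {K : Type*} [Field K] (c : ℕ → K) (N : ℕ)

noncomputable def polyOfCoeffs : K[X] := ∑ k ∈ Finset.range (N + 1), monomial k (c k)

theorem coeff_polyOfCoeffs {j : ℕ} (hj : j ≤ N) : (polyOfCoeffs c N).coeff j = c j := by
  simp [polyOfCoeffs, finsetSum_coeff, Polynomial.coeff_monomial, Nat.lt_succ_iff.mpr hj]

theorem natDegree_polyOfCoeffs_le : (polyOfCoeffs c N).natDegree ≤ N :=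
  natDegree_sum_le_of_forall_le _ _ fun _ hk =>
    (natDegree_monomial_le _).trans (Finset.mem_range_succ_iff.mp hk)

theorem sum_progression_eq_mul_eval (a0 b0 w0 w1 : ℕ) {u v : K} (hv : v ≠ 0) :
    ∑ k ∈ Finset.range (N + 1), c k * (u ^ (a0 + w1 * k) * v ^ (b0 + w0 * (N - k))) =
      u ^ a0 * v ^ (b0 + w0 * N) * (polyOfCoeffs c N).eval (u ^ w1 / v ^ w0) := by
  rw [polyOfCoeffs, eval_finsetSum, Finset.mul_sum]
  refine Finset.sum_congr rfl fun k hk => ?_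
  obtain ⟨m, rfl⟩ := Nat.exists_eq_add_of_le (Finset.mem_range_succ_iff.mp hk)
  rw [Polynomial.eval_monomial, Nat.add_sub_cancel_left, div_pow, ← pow_mul, ← pow_mul]
  field_simp
  ring

theorem sum_progression_zero_right (a0 b0 w0 w1 : ℕ) (h0 : 0 < w0) (u : K) :
    ∑ k ∈ Finset.range (N + 1), c k * (u ^ (a0 + w1 * k) * (0 : K) ^ (b0 + w0 * (N - k))) =
      c N * (u ^ (a0 + w1 * N) * 0 ^ b0) := by
  rw [Finset.sum_eq_single_of_mem N (Finset.self_mem_range_succ N), Nat.sub_self, mul_zero,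
    add_zero]
  intro k hk hkN
  have : 0 < N - k := by have := Finset.mem_range.mp hk; omega
  simp [h0.ne', this.ne']

/-- Where `x0 ^ a0 * x1 ^ b0 * H(x0, x1)` can vanish on `ℙ¹ = Option K`, for the binary form `H`
of degree `N` dehomogenizing to `polyOfCoeffs c N`. -/
noncomputable def zeroCandidates (a0 b0 : ℕ) : Finset (Option K) :=
  open Classical in
  ((polyOfCoeffs c N).roots.toFinset ∪ if a0 = 0 then ∅ else {0}).image some ∪
    if b0 = 0 ∧ c N ≠ 0 then ∅ else {none}

theorem card_zeroCandidates_le (a0 b0 : ℕ) (hg : polyOfCoeffs c N ≠ 0) :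
    (zeroCandidates c N a0 b0).card ≤
      N + (if a0 = 0 then 0 else 1) + (if b0 = 0 then 0 else 1) := by
  classical
  have hdeg := natDegree_polyOfCoeffs_le c N
  have hR : (polyOfCoeffs c N).roots.toFinset.card ≤ N :=
    (Multiset.toFinset_card_le _).trans ((card_roots' _).trans hdeg)
  have hA : (if a0 = 0 then ∅ else {0} : Finset K).card = if a0 = 0 then 0 else 1 := by
    split_ifs <;> rfl
  have hB : (polyOfCoeffs c N).roots.toFinset.card +
      (if b0 = 0 ∧ c N ≠ 0 then ∅ else {none} : Finset (Option K)).card ≤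
        N + if b0 = 0 then 0 else 1 := by
    split_ifs with hcN hb0
    · simpa using hR
    · exact absurd hcN.1 hb0
    · simpa using (polyOfCoeffs c N).card_roots_toFinset_lt_of_coeff_eq_zero hg hdeg
        (by rw [coeff_polyOfCoeffs c N le_rfl]; tauto)
    · simpa using hR
  unfold zeroCandidates
  refine (Finset.card_union_le _ _).trans
    ((Nat.add_le_add_right (Finset.card_image_le.trans (Finset.card_union_le _ _)) _).trans ?_)
  omega

theorem lineCoord_mem_zeroCandidates {a0 b0 w0 w1 : ℕ} (h0 : 0 < w0) (h1 : 0 < w1)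
    (hg : polyOfCoeffs c N ≠ 0) {x : Fin 2 → K} (hx : x ≠ 0)
    (hsum : ∑ k ∈ Finset.range (N + 1),
      c k * (x 0 ^ (a0 + w1 * k) * x 1 ^ (b0 + w0 * (N - k))) = 0) :
    lineCoord w0 w1 x ∈ zeroCandidates c N a0 b0 := by
  classical
  simp only [lineCoord, zeroCandidates, Finset.mem_union]
  by_cases hx1 : x 1 = 0
  · have hx0 : x 0 ≠ 0 := fun hx0 => hx (funext (Fin.forall_fin_two.mpr ⟨hx0, hx1⟩))
    rw [hx1, sum_progression_zero_right c N _ _ _ _ h0] at hsum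
    have hcN : b0 = 0 → c N = 0 := fun hb0 => by simpa [hb0, hx0] using hsum
    rw [if_pos hx1]
    refine Or.inr ?_
    rw [if_neg (by tauto)]
    exact Finset.mem_singleton_self _
  · rw [sum_progression_eq_mul_eval c N _ _ _ _ hx1] at hsum
    rw [if_neg hx1]
    refine Or.inl (Finset.mem_image_of_mem _ (Finset.mem_union.mpr ?_))
    rcases mul_eq_zero.mp hsum with hx0 | hroot
    · have hx0 : x 0 = 0 ∧ a0 ≠ 0 := by simpa [hx1] using hx0
      simp [hx0, h1.ne']
    · exact Or.inl (Multiset.mem_toFinset.mpr ((mem_roots hg).mpr hroot))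

end PolyOfCoeffs

theorem ncard_vanishSet_le (F : Type) [Field F] [Fintype F] {w0 w1 d a0 b0 N : ℕ}
    (h0 : 0 < w0) (h1 : 0 < w1) (hcop : Nat.gcd w0 w1 = 1)
    (hsol : SolutionsParametrized w0 w1 d a0 b0 N) {f : MvPolynomial (Fin 2) F} (hf0 : f ≠ 0)
    (hfh : IsWeightedHomogeneous ![w0, w1] f d) :
    (vanishSet F ![w0, w1] f).ncard ≤
      N + (if a0 = 0 then 0 else 1) + (if b0 = 0 then 0 else 1) := by
  set ι := algebraMap F (AlgebraicClosure F)
  set c := fun k => ι (coeff (progressionExponent w0 w1 a0 b0 N k) f)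
  have hg : polyOfCoeffs c N ≠ 0 := by
    obtain ⟨e, he⟩ := support_nonempty.mpr hf0
    obtain ⟨k, hk, rfl⟩ :=
      Finset.mem_image.mp (support_subset_image_progressionExponent hsol hfh he)
    intro hg0
    have := coeff_polyOfCoeffs c N (Finset.mem_range_succ_iff.mp hk)
    rw [hg0, Polynomial.coeff_zero] at this
    exact mem_support_iff.mp he ((map_eq_zero_iff ι ι.injective).mp this.symm)
  have hsub : PW.coord F w0 w1 '' vanishSet F ![w0, w1] f ⊆ zeroCandidates c N a0 b0 := by
    rintro _ ⟨p, ⟨-, hp⟩, rfl⟩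
    obtain ⟨x, rfl⟩ := Quot.exists_rep p
    refine lineCoord_mem_zeroCandidates c N h0 h1 hg x.2 ?_
    rw [← eval₂_eq_sum_progressionExponent h1 hsol hfh, ← eval_map]
    exact hp x rfl
  calc (vanishSet F ![w0, w1] f).ncard
      = (PW.coord F w0 w1 '' vanishSet F ![w0, w1] f).ncard :=
        (Set.ncard_image_of_injective _ (PW.coord_injective F h0 h1 hcop)).symm
    _ ≤ (zeroCandidates c N a0 b0).card :=
        (Set.ncard_le_ncard hsub (Finset.finite_toSet _)).trans (Set.ncard_coe_finset _).le
    _ ≤ _ := card_zeroCandidates_le c N a0 b0 hg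

/-- Proposition 4.1 of the paper: bounds for the number of rational
zeroes on the weighted projective line `ℙ(w_0, w_1)` in terms of the denumerant. -/
theorem stmt12 (F : Type) [Field F] [Fintype F] (w0 w1 : ℕ) (h0 : 0 < w0) (h1 : 0 < w1)
    (hcop : Nat.gcd w0 w1 = 1)
    (d : ℕ) (hd : ∃ i0 i1 : ℕ, d = w0 * i0 + w1 * i1)
    (f : MvPolynomial (Fin 2) F) (hf0 : f ≠ 0)
    (hfh : MvPolynomial.IsWeightedHomogeneous ![w0, w1] f d) :
    ((w0 ∣ d ∧ w1 ∣ d) →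
      (vanishSet F ![w0, w1] f).ncard ≤ den w0 w1 d - 1) ∧
    (((w0 ∣ d ∧ ¬ w1 ∣ d) ∨ (¬ w0 ∣ d ∧ w1 ∣ d)) →
      (vanishSet F ![w0, w1] f).ncard ≤ (den w0 w1 d - 1) + 1) ∧
    ((¬ w0 ∣ d ∧ ¬ w1 ∣ d) →
      (vanishSet F ![w0, w1] f).ncard ≤ (den w0 w1 d - 1) + 2) := by
  obtain ⟨p, q, rfl⟩ := hd
  obtain ⟨a0, b0, N, hsol⟩ := exists_solutionsParametrized h0 h1 hcop p q
  have hcount := ncard_vanishSet_le F h0 h1 hcop hsol hf0 hfh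
  rw [hsol.den_eq h1, Nat.add_sub_cancel]
  refine ⟨fun ⟨hw0, hw1⟩ => ?_, fun h => ?_, fun _ => ?_⟩
  · simpa [hsol.offset_fst_eq_zero_of_dvd hw1, hsol.offset_snd_eq_zero_of_dvd hw0] using hcount
  · rcases h with ⟨hw0, -⟩ | ⟨-, hw1⟩
    · rw [if_pos (hsol.offset_snd_eq_zero_of_dvd hw0)] at hcount
      split_ifs at hcount <;> omega
    · rw [if_pos (hsol.offset_fst_eq_zero_of_dvd hw1)] at hcount
      split_ifs at hcount <;> omega
  · split_ifs at hcount <;> omega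

end
end

section
/- Let w_0, w_1 be positive integers and d ∈ ℕ. Write the Euclidean division of d by lcm(w_0, w_1) as d = λ·lcm(w_0, w_1) + ρ with 0 ≤ ρ < lcm(w_0, w_1). Then den(d; w_0, w_1) = λ + den(ρ; w_0, w_1) if gcd(w_0, w_1) divides d, and den(d; w_0, w_1) = 0 otherwise; moreover den(ρ; w_0, w_1) ∈ {0, 1}. -/
open MvPolynomial

noncomputable section

lemma stmt13Aux.denSet_finite (w0 w1 d : ℕ) (h0 : 0 < w0) (h1 : 0 < w1) :
    {p : ℕ × ℕ | w0 * p.1 + w1 * p.2 = d}.Finite := by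
  apply Set.Finite.subset (Set.finite_Icc ((0:ℕ),(0:ℕ)) (d,d))
  rintro ⟨a,b⟩ h
  simp only [Set.mem_setOf_eq] at h
  have ha : a ≤ d := by nlinarith
  have hb : b ≤ d := by nlinarith
  exact ⟨⟨Nat.zero_le _, Nat.zero_le _⟩, ⟨ha, hb⟩⟩

lemma stmt13Aux.lcm_eq (w0 w1 : ℕ) : Nat.lcm w0 w1 = w0 * (w1 / Nat.gcd w0 w1) := by
  rw [Nat.lcm, Nat.mul_div_assoc _ (Nat.gcd_dvd_right w0 w1)]

lemma stmt13Aux.uniq_small (w0 w1 : ℕ) (h0 : 0 < w0) (h1 : 0 < w1)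
    {a b c e : ℕ} (h : w0 * a + w1 * b = w0 * c + w1 * e)
    (ha : a < w1 / Nat.gcd w0 w1) (hc : c < w1 / Nat.gcd w0 w1) :
    a = c ∧ b = e := by
  have main : ∀ a b c e : ℕ, a ≤ c → w0 * a + w1 * b = w0 * c + w1 * e →
      a < w1 / Nat.gcd w0 w1 → c < w1 / Nat.gcd w0 w1 → a = c ∧ b = e := by
    intro a b c e hle h ha hc
    have h3 : w0 * a ≤ w0 * c := Nat.mul_le_mul_left w0 hle
    have heb : e ≤ b := by
      by_contra hh
      push_neg at hh
      have : w1 * b < w1 * e := mul_lt_mul_of_pos_left hh h1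
      omega
    have e1 : w0 * (c - a) + w0 * a = w0 * c := by
      rw [← Nat.mul_add, Nat.sub_add_cancel hle]
    have e2 : w1 * (b - e) + w1 * e = w1 * b := by
      rw [← Nat.mul_add, Nat.sub_add_cancel heb]
    have key : w0 * (c - a) = w1 * (b - e) := by omega
    have hdvd : Nat.lcm w0 w1 ∣ w0 * (c - a) := by
      apply Nat.lcm_dvd (Dvd.intro _ rfl)
      rw [key]; exact Dvd.intro _ rfl
    have hlt : w0 * (c - a) < Nat.lcm w0 w1 := by
      rw [stmt13Aux.lcm_eq]
      have h5 : c - a < w1 / Nat.gcd w0 w1 := by omega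
      exact mul_lt_mul_of_pos_left h5 h0
    have hz := Nat.eq_zero_of_dvd_of_lt hdvd hlt
    have hac : a = c := by
      rcases Nat.mul_eq_zero.mp hz with h' | h' <;> omega
    subst hac
    refine ⟨rfl, ?_⟩
    have : w1 * b = w1 * e := by omega
    exact Nat.eq_of_mul_eq_mul_left h1 this
  rcases le_total a c with hle | hle
  · exact main a b c e hle h ha hc
  · obtain ⟨h1', h2'⟩ := main c e a b hle h.symm hc ha
    exact ⟨h1'.symm, h2'.symm⟩

lemma stmt13Aux.exists_small (w0 w1 : ℕ) (h0 : 0 < w0) (h1 : 0 < w1) (N : ℕ)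
    (hgd : Nat.gcd w0 w1 ∣ N) (hN : Nat.lcm w0 w1 ≤ N) :
    ∃ a b, w0 * a + w1 * b = N ∧ a < w1 / Nat.gcd w0 w1 := by
  have hco0 : Nat.Coprime (w0 / Nat.gcd w0 w1) (w1 / Nat.gcd w0 w1) :=
    Nat.coprime_div_gcd_div_gcd (Nat.gcd_pos_of_pos_left _ h0)
  have hLe : Nat.lcm w0 w1 = Nat.gcd w0 w1 * (w0 / Nat.gcd w0 w1) * (w1 / Nat.gcd w0 w1) := by
    rw [stmt13Aux.lcm_eq, Nat.mul_div_cancel' (Nat.gcd_dvd_left w0 w1)]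
  have hw0' : Nat.gcd w0 w1 * (w0 / Nat.gcd w0 w1) = w0 :=
    Nat.mul_div_cancel' (Nat.gcd_dvd_left w0 w1)
  have hw1' : Nat.gcd w0 w1 * (w1 / Nat.gcd w0 w1) = w1 :=
    Nat.mul_div_cancel' (Nat.gcd_dvd_right w0 w1)
  obtain ⟨g, hgdef⟩ : ∃ g, Nat.gcd w0 w1 = g := ⟨_, rfl⟩
  rw [hgdef] at hco0 hLe hw0' hw1' hgd ⊢
  have hgpos : 0 < g := hgdef ▸ Nat.gcd_pos_of_pos_left _ h0
  obtain ⟨n, hn⟩ := hgd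
  obtain ⟨u, hu⟩ : ∃ u, w0 / g = u := ⟨_, rfl⟩
  obtain ⟨v, hv⟩ : ∃ v, w1 / g = v := ⟨_, rfl⟩
  rw [hu] at hco0 hLe hw0'
  rw [hv] at hco0 hLe hw1' ⊢
  have hvpos : 0 < v := by
    rcases Nat.eq_zero_or_pos v with h' | h'
    · rw [h', mul_zero] at hw1'; omega
    · exact h'
  haveI : NeZero v := ⟨by omega⟩
  set x : ZMod v := (u : ZMod v)⁻¹ * (n : ZMod v) with hx
  have hav : x.val < v := ZMod.val_lt x
  have hmod : ((u * x.val : ℕ) : ZMod v) = (n : ZMod v) := by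
    push_cast
    rw [ZMod.natCast_val, ZMod.cast_id, hx, ← mul_assoc,
      ZMod.coe_mul_inv_eq_one u hco0, one_mul]
  have hmodeq : u * x.val ≡ n [MOD v] := (ZMod.natCast_eq_natCast_iff _ _ _).mp hmod
  have hwa : w0 * x.val ≤ N := by
    calc w0 * x.val = g * u * x.val := by rw [hw0']
      _ ≤ g * u * v := Nat.mul_le_mul_left _ (by omega)
      _ = Nat.lcm w0 w1 := hLe.symm
      _ ≤ N := hN
  have hua : u * x.val ≤ n := by
    have hh : g * (u * x.val) ≤ g * n := by
      rw [← mul_assoc, hw0', ← hn]; exact hwa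
    exact Nat.le_of_mul_le_mul_left hh hgpos
  obtain ⟨b, hb⟩ := (Nat.modEq_iff_dvd' hua).mp hmodeq
  refine ⟨x.val, b, ?_, hav⟩
  rw [← hw0', ← hw1', hn]
  calc g * u * x.val + g * v * b = g * (u * x.val + v * b) := by ring
    _ = g * (u * x.val + (n - u * x.val)) := by rw [← hb]
    _ = g * n := by rw [Nat.add_sub_cancel' hua]

lemma stmt13Aux.den_add_lcm (w0 w1 : ℕ) (h0 : 0 < w0) (h1 : 0 < w1) (N : ℕ)
    (hg : Nat.gcd w0 w1 ∣ N) :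
    den w0 w1 (N + Nat.lcm w0 w1) = den w0 w1 N + 1 := by
  have hLv : Nat.lcm w0 w1 = w0 * (w1 / Nat.gcd w0 w1) := stmt13Aux.lcm_eq w0 w1
  have hLpos : 0 < Nat.lcm w0 w1 := Nat.pos_of_ne_zero (Nat.lcm_ne_zero (by omega) (by omega))
  set v := w1 / Nat.gcd w0 w1 with hv
  set L := Nat.lcm w0 w1 with hL
  set S := {p : ℕ × ℕ | w0 * p.1 + w1 * p.2 = N + L} with hS
  set T := {p : ℕ × ℕ | w0 * p.1 + w1 * p.2 = N} with hT
  have hTfin : T.Finite := stmt13Aux.denSet_finite w0 w1 N h0 h1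
  have himg : (fun p : ℕ × ℕ => (p.1 + v, p.2)) '' T = {p ∈ S | v ≤ p.1} := by
    ext ⟨a, b⟩
    simp only [Set.mem_image, Set.mem_setOf_eq, Set.mem_sep_iff, hS, hT, Prod.mk.injEq]
    constructor
    · rintro ⟨⟨x, y⟩, hxy, hx, hy⟩
      subst hx; subst hy
      simp only [Set.mem_setOf_eq, hT] at hxy
      constructor
      · simp only [Set.mem_setOf_eq]
        rw [Nat.mul_add, hLv]; omega
      · omega
    · rintro ⟨hab, hva⟩
      refine ⟨(a - v, b), ?_, by omega, rfl⟩
      simp only [Set.mem_setOf_eq] at hab ⊢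
      have : w0 * (a - v) + w0 * v = w0 * a := by
        rw [← Nat.mul_add, Nat.sub_add_cancel hva]
      rw [hLv] at hab
      omega
  obtain ⟨a0, b0, hab0, ha0⟩ := stmt13Aux.exists_small w0 w1 h0 h1 (N + L)
    (dvd_add hg (dvd_trans (Nat.gcd_dvd_left _ _) (Nat.dvd_lcm_left _ _))) (by rw [hL]; omega)
  have hsmall : {p ∈ S | p.1 < v} = {(a0, b0)} := by
    ext ⟨a, b⟩
    simp only [Set.mem_sep_iff, Set.mem_setOf_eq, Set.mem_singleton_iff, hS, Prod.mk.injEq]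
    constructor
    · rintro ⟨hab, hav⟩
      exact stmt13Aux.uniq_small w0 w1 h0 h1 (hab.trans hab0.symm) hav ha0
    · rintro ⟨rfl, rfl⟩
      exact ⟨hab0, ha0⟩
  have hsplit : S = {p ∈ S | p.1 < v} ∪ {p ∈ S | v ≤ p.1} := by
    ext p
    constructor
    · intro hp
      rcases lt_or_ge p.1 v with h | h
      · exact Or.inl ⟨hp, h⟩
      · exact Or.inr ⟨hp, h⟩
    · rintro (⟨hp, _⟩ | ⟨hp, _⟩) <;> exact hp
  have hdisj : Disjoint {p ∈ S | p.1 < v} {p ∈ S | v ≤ p.1} := by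
    rw [Set.disjoint_left]
    rintro p ⟨_, hp⟩ ⟨_, hq⟩; omega
  have hSfin : S.Finite := stmt13Aux.denSet_finite w0 w1 (N + L) h0 h1
  have hinj : Function.Injective (fun p : ℕ × ℕ => (p.1 + v, p.2)) := by
    rintro ⟨a, b⟩ ⟨c, e⟩ h
    simp only [Prod.mk.injEq] at h
    exact Prod.ext (by omega) h.2
  calc den w0 w1 (N + L) = S.ncard := rfl
    _ = ({p ∈ S | p.1 < v} ∪ {p ∈ S | v ≤ p.1}).ncard := by rw [← hsplit]
    _ = ({p ∈ S | p.1 < v}).ncard + ({p ∈ S | v ≤ p.1}).ncard :=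
        Set.ncard_union_eq hdisj (hSfin.subset (Set.sep_subset _ _))
          (hSfin.subset (Set.sep_subset _ _))
    _ = 1 + T.ncard := by
        rw [hsmall, Set.ncard_singleton, ← himg, Set.ncard_image_of_injective _ hinj]
    _ = den w0 w1 N + 1 := by rw [Nat.add_comm]; rfl

/-- Lemma 4.2 of the paper: computation of the denumerant via
Euclidean division by `lcm(w_0, w_1)`. -/
theorem stmt13 (w0 w1 : ℕ) (h0 : 0 < w0) (h1 : 0 < w1)
    (d lam rho : ℕ) (hdiv : d = lam * Nat.lcm w0 w1 + rho)
    (hrho : rho < Nat.lcm w0 w1) :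
    (if Nat.gcd w0 w1 ∣ d then den w0 w1 d = lam + den w0 w1 rho
      else den w0 w1 d = 0) ∧
    den w0 w1 rho ≤ 1 := by
  have hLv : Nat.lcm w0 w1 = w0 * (w1 / Nat.gcd w0 w1) := stmt13Aux.lcm_eq w0 w1
  have hrho1 : den w0 w1 rho ≤ 1 := by
    have hsub : {p : ℕ × ℕ | w0 * p.1 + w1 * p.2 = rho}.Subsingleton := by
      rintro ⟨a, b⟩ ha ⟨c, e⟩ hc
      simp only [Set.mem_setOf_eq] at ha hc
      have hav : a < w1 / Nat.gcd w0 w1 := by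
        by_contra hh
        push_neg at hh
        have : w0 * (w1 / Nat.gcd w0 w1) ≤ w0 * a := Nat.mul_le_mul_left w0 hh
        omega
      have hcv : c < w1 / Nat.gcd w0 w1 := by
        by_contra hh
        push_neg at hh
        have : w0 * (w1 / Nat.gcd w0 w1) ≤ w0 * c := Nat.mul_le_mul_left w0 hh
        omega
      obtain ⟨h1', h2'⟩ := stmt13Aux.uniq_small w0 w1 h0 h1 (ha.trans hc.symm) hav hcv
      simp [h1', h2']
    exact (Set.ncard_le_one (stmt13Aux.denSet_finite w0 w1 rho h0 h1)).mpr
      (fun a ha b hb => hsub ha hb)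
  refine ⟨?_, hrho1⟩
  have hgL : Nat.gcd w0 w1 ∣ Nat.lcm w0 w1 :=
    dvd_trans (Nat.gcd_dvd_left _ _) (Nat.dvd_lcm_left _ _)
  by_cases hgd : Nat.gcd w0 w1 ∣ d
  · rw [if_pos hgd]
    have hgrho : Nat.gcd w0 w1 ∣ rho := by
      have h2 : Nat.gcd w0 w1 ∣ lam * Nat.lcm w0 w1 := Dvd.dvd.mul_left hgL lam
      have h3 : rho = d - lam * Nat.lcm w0 w1 := by omega
      rw [h3]
      exact Nat.dvd_sub hgd h2
    have key : ∀ k : ℕ, den w0 w1 (k * Nat.lcm w0 w1 + rho) = k + den w0 w1 rho := by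
      intro k
      induction k with
      | zero => simp
      | succ k ih =>
        have : (k + 1) * Nat.lcm w0 w1 + rho = (k * Nat.lcm w0 w1 + rho) + Nat.lcm w0 w1 := by
          ring
        rw [this, stmt13Aux.den_add_lcm w0 w1 h0 h1 _ (by
          exact dvd_add (Dvd.dvd.mul_left hgL k) hgrho), ih]
        omega
    rw [hdiv, key lam]
  · rw [if_neg hgd]
    have : {p : ℕ × ℕ | w0 * p.1 + w1 * p.2 = d} = ∅ := by
      ext ⟨a, b⟩
      simp only [Set.mem_setOf_eq, Set.mem_empty_iff_false, iff_false]
      intro hab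
      exact hgd (hab ▸ dvd_add (Dvd.dvd.mul_right (Nat.gcd_dvd_left _ _) a)
        (Dvd.dvd.mul_right (Nat.gcd_dvd_right _ _) b))
    rw [den, this, Set.ncard_empty]


end
end

section
/- Let q be a prime power, w = (w_0, …, w_m) a weight vector of positive integers, γ ≥ 1 an integer, and d ∈ ⟨w_0, …, w_m⟩_ℕ. Then e_q(γd; γw_0, γw_1, …, γw_m) = e_q(d; w_0, w_1, …, w_m). -/
open MvPolynomial

noncomputable section

theorem Finsupp.weight_const_mul {σ : Type*} (γ : ℕ) (w : σ → ℕ) (a : σ →₀ ℕ) :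
    Finsupp.weight (fun i => γ * w i) a = γ * Finsupp.weight w a := by
  simp only [Finsupp.weight_apply, Finsupp.mul_sum, smul_eq_mul, mul_left_comm]

theorem isWeightedHomogeneous_const_mul_iff {R σ : Type*} [CommSemiring R] {w : σ → ℕ}
    {γ : ℕ} (hγ : γ ≠ 0) {f : MvPolynomial σ R} {d : ℕ} :
    IsWeightedHomogeneous (fun i => γ * w i) f (γ * d) ↔ IsWeightedHomogeneous w f d := by
  refine forall_congr' fun a => imp_congr_right fun _ => ?_
  rw [Finsupp.weight_const_mul, Nat.mul_right_inj hγ]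

section WeightedProjectiveSpace

variable {F : Type} [Field F] {m : ℕ} {w : Fin (m + 1) → ℕ}

/-- Every unit of the algebraic closure has a `γ`-th root, so scaling by the `λ^(γ w)` and by
the `λ^w` gives the same orbits. -/
theorem wRel_const_mul {γ : ℕ} (hγ : γ ≠ 0) : wRel F (fun i => γ * w i) = wRel F w := by
  ext x y
  constructor
  · rintro ⟨μ, h⟩
    exact ⟨μ ^ γ, fun i => by rw [h i, Units.val_pow_eq_pow_val, ← pow_mul]⟩
  · rintro ⟨lam, h⟩
    obtain ⟨μ, hμ⟩ :=
      IsAlgClosed.exists_pow_nat_eq (lam : AlgebraicClosure F) (Nat.pos_of_ne_zero hγ)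
    have hμ0 : μ ≠ 0 := by
      rintro rfl
      exact lam.ne_zero (by rw [← hμ, zero_pow hγ])
    exact ⟨Units.mk0 μ hμ0, fun i => by rw [h i, Units.val_mk0, pow_mul, hμ]⟩

theorem vanishSet_ncard_congr [Fintype F] {w' : Fin (m + 1) → ℕ} (h : wRel F w = wRel F w')
    (f : MvPolynomial (Fin (m + 1)) F) :
    (vanishSet F w f).ncard = (vanishSet F w' f).ncard := by
  unfold vanishSet ratPts PW.mk PW
  rw [h]

end WeightedProjectiveSpace

theorem stmt19_general (F : Type) [Field F] [Fintype F] (m : ℕ) (w : Fin (m + 1) → ℕ)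
    (γ : ℕ) (hγ : 1 ≤ γ)
    (d : ℕ) :
    eMax F (fun i => γ * w i) (γ * d) = eMax F w d := by
  have hγ0 : γ ≠ 0 := Nat.one_le_iff_ne_zero.mp hγ
  unfold eMax
  simp only [isWeightedHomogeneous_const_mul_iff hγ0,
    vanishSet_ncard_congr (wRel_const_mul hγ0)]

/-- Equation (4.2) of the paper: rescaling all the weights and the
degree by a common factor `γ` does not change `e_q`. -/
theorem stmt19 (F : Type) [Field F] [Fintype F] (m : ℕ) (w : Fin (m + 1) → ℕ)
    (hpos : ∀ i, 1 ≤ w i) (γ : ℕ) (hγ : 1 ≤ γ)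
    (d : ℕ) (hd : ∃ c : Fin (m + 1) → ℕ, d = ∑ i, w i * c i) :
    eMax F (fun i => γ * w i) (γ * d) = eMax F w d :=
  stmt19_general F m w γ hγ d

end
end
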